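/- arXiv:1401.2748 — 8 statements merged into one kernel-verified Lean document; each statement's English description precedes it below -/
import Mathlib

section
/- In A = F[X,Y]/(X^r,Y^s) with 1 \u2264 r \u2264 s, the elements w_i := \u2211_{j=0}^{i} (-1)^j x^{r-1-j} y^{s-1-i+j}, for 0 \u2264 i \u2264 r-1, form an F-basis of the annihilator Ann(x+y) = { a \u2208 A : a(x+y) = 0 }. In particular Ann(x+y) has F-dimension exactly r. -/
open MvPolynomial

/-- The ideal `(X^r, Y^s)` in `F[X,Y]`. -/
noncomputable def Irs (F : Type*) [Field F] (r s : ℕ) : Ideal (MvPolynomial (Fin 2) F) :=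
  Ideal.span {(X 0 : MvPolynomial (Fin 2) F) ^ r, (X 1 : MvPolynomial (Fin 2) F) ^ s}

/-- The quotient algebra `A = F[X,Y]/(X^r, Y^s)`. -/
noncomputable abbrev Aq (F : Type*) [Field F] (r s : ℕ) :=
  MvPolynomial (Fin 2) F ⧸ Irs F r s

/-- The image `x` of `X` in `A`. -/
noncomputable def xq (F : Type*) [Field F] (r s : ℕ) : Aq F r s :=
  Ideal.Quotient.mk (Irs F r s) (X 0)

/-- The image `y` of `Y` in `A`. -/
noncomputable def yq (F : Type*) [Field F] (r s : ℕ) : Aq F r s :=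
  Ideal.Quotient.mk (Irs F r s) (X 1)

/-- `w_i = ∑_{j=0}^{i} (-1)^j x^{r-1-j} y^{s-1-i+j}`. -/
noncomputable def wq (F : Type*) [Field F] (r s : ℕ) (i : ℕ) : Aq F r s :=
  ∑ j ∈ Finset.range (i + 1),
    (-1 : Aq F r s) ^ j * (xq F r s ^ (r - 1 - j) * yq F r s ^ (s - 1 - i + j))

/-!
Write `a ∈ A` as `∑ c p q • x^p y^q` over the box `p < r`, `q < s`. Then `a (x + y) = 0` says
`c (p-1) q + c p (q-1) = 0` inside the box, so `c` alternates in sign along each antidiagonal.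
The antidiagonals `p + q < s - 1` meet the edge `p = 0`, where `c` vanishes; since `r ≤ s`, every
other one meets the column `p = r - 1` at some `q ≥ s - r`. Hence `a` is determined by its
coefficients at `x^(r-1) y^(s-1-i)`, `i < r`, and `w_i` is the telescoping sum killed by `x + y`
whose only such nonzero coefficient is `1` at index `i`.
-/

def AlternatesOnAntidiagonals {M : Type*} [AddZeroClass M] (r s : ℕ) (c : ℕ → ℕ → M) :
    Prop :=
  ∀ a b, a + 1 < r → b + 1 < s → c a (b + 1) + c (a + 1) b = 0

namespace AlternatesOnAntidiagonals

variable {r s : ℕ}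

lemma eq_zero_of_add_lt {M : Type*} [AddZeroClass M] {c : ℕ → ℕ → M}
    (hc : AlternatesOnAntidiagonals r s c) (h_edge : ∀ b, b + 1 < s → c 0 b = 0) :
    ∀ a b, a < r → a + b + 1 < s → c a b = 0
  | 0, b, _, hb => h_edge b (by omega)
  | a + 1, b, ha, hb => by
    have h := hc a b ha (by omega)
    rwa [hc.eq_zero_of_add_lt h_edge a (b + 1) (by omega) (by omega), zero_add] at h

lemma eq_neg_one_pow_mul {R : Type*} [Ring R] {c : ℕ → ℕ → R}
    (hc : AlternatesOnAntidiagonals r s c) :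
    ∀ k a b, a + k = r - 1 → k ≤ b → b < s → c a b = (-1) ^ k * c (r - 1) (b - k)
  | 0, a, b, hk, _, _ => by rw [show a = r - 1 by omega, pow_zero, one_mul, Nat.sub_zero]
  | k + 1, a, b, hk, hkb, hb => by
    obtain ⟨b, rfl⟩ : ∃ b', b = b' + 1 := ⟨b - 1, by omega⟩
    rw [eq_neg_of_add_eq_zero_left (hc a b (by omega) hb),
      hc.eq_neg_one_pow_mul k (a + 1) b (by omega) (by omega) (by omega),
      Nat.add_sub_add_right, pow_succ, mul_neg_one, neg_mul]

end AlternatesOnAntidiagonals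

namespace Irs

variable {F : Type*} [Field F] {r s : ℕ}

noncomputable def expVec (a b : ℕ) : Fin 2 →₀ ℕ := Finsupp.single 0 a + Finsupp.single 1 b

lemma expVec_self (m : Fin 2 →₀ ℕ) : expVec (m 0) (m 1) = m := by
  ext i; fin_cases i <;> simp [expVec]

lemma expVec_inj {a b p q : ℕ} : expVec a b = expVec p q ↔ a = p ∧ b = q := by
  constructor
  · intro h
    exact ⟨by simpa [expVec] using congrArg (· 0) h, by simpa [expVec] using congrArg (· 1) h⟩
  · rintro ⟨rfl, rfl⟩; rfl

lemma expVec_succ_left (a b : ℕ) : expVec (a + 1) b = expVec a b + Finsupp.single 0 1 := by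
  simp only [expVec, Finsupp.single_add]; abel

lemma expVec_succ_right (a b : ℕ) : expVec a (b + 1) = expVec a b + Finsupp.single 1 1 := by
  simp only [expVec, Finsupp.single_add]; abel

lemma mem_Irs_iff {P : MvPolynomial (Fin 2) F} :
    P ∈ Irs F r s ↔ ∀ a < r, ∀ b < s, coeff (expVec a b) P = 0 := by
  have hspan : Irs F r s = Ideal.span
      ((fun m => monomial m (1 : F)) '' {Finsupp.single 0 r, Finsupp.single 1 s}) := by
    simp [Irs, Set.image_pair, X_pow_eq_monomial]
  rw [hspan, mem_ideal_span_monomial_image]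
  constructor
  · intro h a ha b hb
    by_contra hne
    obtain ⟨m, hm, hle⟩ := h _ (mem_support_iff.2 hne)
    rcases hm with rfl | rfl <;> simp [Finsupp.single_le_iff, expVec] at hle <;> omega
  · intro h m hm
    rw [mem_support_iff, ← expVec_self m] at hm
    by_cases h0 : m 0 < r
    · exact ⟨_, .inr rfl, Finsupp.single_le_iff.2 (not_lt.1 fun h1 => hm (h _ h0 _ h1))⟩
    · exact ⟨_, .inl rfl, Finsupp.single_le_iff.2 (not_lt.1 h0)⟩

lemma mk_eq_zero_iff {P : MvPolynomial (Fin 2) F} :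
    Ideal.Quotient.mk (Irs F r s) P = 0 ↔ ∀ a < r, ∀ b < s, coeff (expVec a b) P = 0 := by
  rw [Ideal.Quotient.eq_zero_iff_mem, mem_Irs_iff]

lemma mk_monomial_expVec (a b : ℕ) :
    Ideal.Quotient.mk (Irs F r s) (monomial (expVec a b) 1) = xq F r s ^ a * yq F r s ^ b := by
  rw [xq, yq, ← map_pow, ← map_pow, ← map_mul, X_pow_eq_monomial, X_pow_eq_monomial,
    monomial_mul, mul_one, expVec]

lemma xq_pow_eq_zero {n : ℕ} (hn : r ≤ n) : xq F r s ^ n = 0 :=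
  pow_eq_zero_of_le hn <| by
    rw [xq, ← map_pow, Ideal.Quotient.eq_zero_iff_mem]; exact Ideal.subset_span (by simp)

lemma yq_pow_eq_zero {n : ℕ} (hn : s ≤ n) : yq F r s ^ n = 0 :=
  pow_eq_zero_of_le hn <| by
    rw [yq, ← map_pow, Ideal.Quotient.eq_zero_iff_mem]; exact Ideal.subset_span (by simp)

lemma wq_mul_add_eq_zero {i : ℕ} (hi : i < r) : wq F r s i * (xq F r s + yq F r s) = 0 := by
  set f : ℕ → Aq F r s := fun j => (-1) ^ j * xq F r s ^ (r - j) * yq F r s ^ (s - 1 - i + j)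
  have hterm : ∀ j ∈ Finset.range (i + 1), (-1 : Aq F r s) ^ j *
      (xq F r s ^ (r - 1 - j) * yq F r s ^ (s - 1 - i + j)) * (xq F r s + yq F r s) =
      f j - f (j + 1) := by
    intro j hj
    have hrj : r - j = r - 1 - j + 1 := by rw [Finset.mem_range] at hj; omega
    simp only [f, hrj, show r - (j + 1) = r - 1 - j by omega, ← add_assoc, pow_succ]
    ring
  rw [wq, Finset.sum_mul, Finset.sum_congr rfl hterm, Finset.sum_range_sub']
  simp only [f, Nat.sub_zero, xq_pow_eq_zero le_rfl,
    yq_pow_eq_zero (show s ≤ s - 1 - i + (i + 1) by omega)]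
  ring

lemma coeff_mul_X_add_X_succ_succ (Q : MvPolynomial (Fin 2) F) (a b : ℕ) :
    coeff (expVec (a + 1) (b + 1)) (Q * (X 0 + X 1)) =
      coeff (expVec a (b + 1)) Q + coeff (expVec (a + 1) b) Q := by
  rw [mul_add, coeff_add, expVec_succ_left a, coeff_mul_X, ← expVec_succ_left,
    expVec_succ_right (a + 1), coeff_mul_X]

lemma coeff_mul_X_add_X_zero_succ (Q : MvPolynomial (Fin 2) F) (b : ℕ) :
    coeff (expVec 0 (b + 1)) (Q * (X 0 + X 1)) = coeff (expVec 0 b) Q := by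
  rw [mul_add, coeff_add, coeff_mul_X', if_neg (by simp [expVec]), expVec_succ_right,
    coeff_mul_X, zero_add]

lemma mem_Irs_of_mul_X_add_X_mem (hrs : r ≤ s) {Q : MvPolynomial (Fin 2) F}
    (hQ : Q * (X 0 + X 1) ∈ Irs F r s)
    (hlast : ∀ i < r, coeff (expVec (r - 1) (s - 1 - i)) Q = 0) :
    Q ∈ Irs F r s := by
  rw [mem_Irs_iff] at hQ ⊢
  set c : ℕ → ℕ → F := fun a b => coeff (expVec a b) Q
  have hc : AlternatesOnAntidiagonals r s c := fun a b ha hb =>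
    (coeff_mul_X_add_X_succ_succ Q a b).symm.trans (hQ _ ha _ hb)
  intro a ha b hb
  show c a b = 0
  by_cases hab : a + b + 1 < s
  · have h_edge : ∀ b, b + 1 < s → c 0 b = 0 := fun b hb =>
      (coeff_mul_X_add_X_zero_succ Q b).symm.trans (hQ _ (by omega) _ hb)
    exact hc.eq_zero_of_add_lt h_edge a b ha hab
  · obtain ⟨i, hi, hq⟩ : ∃ i < r, b - (r - 1 - a) = s - 1 - i :=
      ⟨s - 1 - (b - (r - 1 - a)), by omega, by omega⟩
    rw [hc.eq_neg_one_pow_mul (r - 1 - a) a b (by omega) (by omega) hb, hq]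
    simp [c, hlast i hi]

variable (F) in
noncomputable def wpoly (r s i : ℕ) : MvPolynomial (Fin 2) F :=
  ∑ j ∈ Finset.range (i + 1), (-1 : F) ^ j • monomial (expVec (r - 1 - j) (s - 1 - i + j)) 1

lemma mk_wpoly (i : ℕ) : Ideal.Quotient.mk (Irs F r s) (wpoly F r s i) = wq F r s i := by
  simp [wpoly, wq, smul_eq_C_mul, mk_monomial_expVec]

lemma mk_sum_smul_wpoly (t : Fin r → F) :
    Ideal.Quotient.mk (Irs F r s) (∑ i, t i • wpoly F r s i) = ∑ i, t i • wq F r s i := by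
  simp [← Ideal.Quotient.mkₐ_eq_mk F, map_sum, map_smul, mk_wpoly]

lemma coeff_wpoly_last (hrs : r ≤ s) {i k : ℕ} (hi : i < r) (hk : k < r) :
    coeff (expVec (r - 1) (s - 1 - k)) (wpoly F r s i) = if i = k then 1 else 0 := by
  simp only [wpoly, coeff_sum, coeff_smul, coeff_monomial, expVec_inj]
  rw [Finset.sum_eq_single 0]
  · simp only [pow_zero, Nat.sub_zero, add_zero, one_smul, true_and]
    exact if_congr (by omega) rfl rfl
  · intro j _ hj
    rw [if_neg (by omega), smul_zero]
  · simp

lemma coeff_sum_smul_wpoly_last (hrs : r ≤ s) (t : Fin r → F) (k : Fin r) :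
    coeff (expVec (r - 1) (s - 1 - k)) (∑ i, t i • wpoly F r s i) = t k := by
  simp [coeff_sum, coeff_wpoly_last hrs _ k.isLt, Fin.val_inj]

lemma linearIndependent_wq (hrs : r ≤ s) :
    LinearIndependent F (fun i : Fin r => wq F r s i) := by
  rw [Fintype.linearIndependent_iff]
  intro t ht k
  have hk := k.isLt
  rw [← mk_sum_smul_wpoly, mk_eq_zero_iff] at ht
  simpa [coeff_sum_smul_wpoly_last hrs] using ht (r - 1) (by omega) (s - 1 - k) (by omega)

lemma span_wq_eq_ker (hrs : r ≤ s) :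
    Submodule.span F (Set.range fun i : Fin r => wq F r s i) =
      LinearMap.ker (LinearMap.mulRight F (xq F r s + yq F r s)) := by
  have hle : Submodule.span F (Set.range fun i : Fin r => wq F r s i) ≤
      LinearMap.ker (LinearMap.mulRight F (xq F r s + yq F r s)) := by
    rw [Submodule.span_le]
    rintro _ ⟨i, rfl⟩
    exact wq_mul_add_eq_zero i.isLt
  refine le_antisymm hle fun a ha => ?_
  obtain ⟨P, rfl⟩ := Ideal.Quotient.mk_surjective a
  set t : Fin r → F := fun i => coeff (expVec (r - 1) (s - 1 - i)) P
  have hsum :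
      ∑ i, t i • wq F r s i ∈ Submodule.span F (Set.range fun i : Fin r => wq F r s i) :=
    Submodule.sum_smul_mem _ _ fun i _ => Submodule.subset_span ⟨i, rfl⟩
  have hQ : P - ∑ i, t i • wpoly F r s i ∈ Irs F r s := by
    refine mem_Irs_of_mul_X_add_X_mem hrs ?_ fun i hi => ?_
    · have hker := sub_mem ha (hle hsum)
      rw [LinearMap.mem_ker, LinearMap.mulRight_apply, ← mk_sum_smul_wpoly, ← map_sub] at hker
      rw [← Ideal.Quotient.eq_zero_iff_mem, map_mul, map_add]
      exact hker
    · simp [t, coeff_sum_smul_wpoly_last hrs t ⟨i, hi⟩]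
  rw [Ideal.Quotient.eq.2 hQ, mk_sum_smul_wpoly]
  exact hsum

end Irs

theorem stmt2_general (F : Type*) [Field F] (r s : ℕ) (hrs : r ≤ s) :
    LinearIndependent F (fun i : Fin r => wq F r s i) ∧
    Submodule.span F (Set.range fun i : Fin r => wq F r s i) =
      LinearMap.ker (LinearMap.mulRight F (xq F r s + yq F r s)) ∧
    Module.finrank F
      (LinearMap.ker (LinearMap.mulRight F (xq F r s + yq F r s))) = r := by
  have hindep := Irs.linearIndependent_wq (F := F) hrs
  have hspan := Irs.span_wq_eq_ker (F := F) hrs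
  refine ⟨hindep, hspan, ?_⟩
  rw [← hspan, finrank_span_eq_card hindep, Fintype.card_fin]

/-- The elements `w_0, …, w_{r-1}` form an `F`-basis of `Ann(x+y)`; in particular
`Ann(x+y)` has dimension `r`. -/
theorem stmt2 (F : Type*) [Field F] (r s : ℕ) (hr : 1 ≤ r) (hrs : r ≤ s) :
    LinearIndependent F (fun i : Fin r => wq F r s i) ∧
    Submodule.span F (Set.range fun i : Fin r => wq F r s i) =
      LinearMap.ker (LinearMap.mulRight F (xq F r s + yq F r s)) ∧
    Module.finrank F
      (LinearMap.ker (LinearMap.mulRight F (xq F r s + yq F r s))) = r :=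
  stmt2_general F r s hrs
end

section
/- In A = F[X,Y]/(X^r,Y^s) with 1 \u2264 r \u2264 s, if n is the least positive integer with (x+y)^n = 0 (equivalently n = dim_F F[x+y]), then (x+y)^{n-1} = (-1)^{r-1} C(n-1, r-1) \u2211_{i=n-s}^{r-1} (-x)^i y^{n-1-i}, and the binomial coefficient C(n-1, r-1) is nonzero in F. -/
/-!
No element of `(X^r, Y^s)` involves a monomial `X^i Y^j` with `i < r`, `j < s`, so
`(x+y)^n = 0` forces `C(n, k) = 0` in `F` for `n - s < k < r`. By Pascal's rule,
`(-1)^k C(n-1, k)` is then constant for `n - s ≤ k ≤ r - 1`, and the expansion of `(x+y)^{n-1}`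
only involves these `k`. If that constant vanished, `(x+y)^{n-1}` would be `0`, contradicting the
minimality of `n`.
-/

open MvPolynomial

open Finset

theorem MvPolynomial.coeff_X_add_X_pow {σ R : Type*} [CommSemiring R] {i j : σ} (hij : i ≠ j)
    {m k : ℕ} (hk : k ≤ m) :
    coeff (Finsupp.single i k + Finsupp.single j (m - k)) ((X i + X j : MvPolynomial σ R) ^ m) =
      m.choose k := by
  classical
  have hterm (l : ℕ) : (X i ^ l * X j ^ (m - l) * (m.choose l : MvPolynomial σ R)) =
      monomial (Finsupp.single i l + Finsupp.single j (m - l)) (m.choose l : R) := by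
    rw [X_pow_eq_monomial, X_pow_eq_monomial, monomial_mul, ← map_natCast C, mul_comm,
      C_mul_monomial, one_mul, mul_one]
  simp only [add_pow, coeff_sum, hterm, coeff_monomial]
  rw [sum_eq_single_of_mem k (mem_range.2 (Nat.lt_succ_of_le hk)) fun l _ hlk => if_neg ?_,
    if_pos rfl]
  intro h
  exact hlk (by simpa [hij.symm] using DFunLike.congr_fun h i)

theorem coeff_eq_zero_of_mem_Irs {F : Type*} [Field F] {r s : ℕ} {p : MvPolynomial (Fin 2) F}
    (hp : p ∈ Irs F r s) {e : Fin 2 →₀ ℕ} (he₀ : e 0 < r) (he₁ : e 1 < s) : coeff e p = 0 := by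
  obtain ⟨u, v, rfl⟩ := Ideal.mem_span_pair.mp hp
  have hx : ¬ Finsupp.single 0 r ≤ e := fun h => by simpa using (h 0).trans_lt he₀
  have hy : ¬ Finsupp.single 1 s ≤ e := fun h => by simpa using (h 1).trans_lt he₁
  rw [coeff_add, X_pow_eq_monomial, X_pow_eq_monomial, coeff_mul_monomial', coeff_mul_monomial',
    if_neg hx, if_neg hy, add_zero]

theorem xq_pow_eq_zero (F : Type*) [Field F] (r s : ℕ) : xq F r s ^ r = 0 := by
  rw [xq, ← map_pow, Ideal.Quotient.eq_zero_iff_mem]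
  exact Ideal.subset_span (by simp)

theorem yq_pow_eq_zero (F : Type*) [Field F] (r s : ℕ) : yq F r s ^ s = 0 := by
  rw [yq, ← map_pow, Ideal.Quotient.eq_zero_iff_mem]
  exact Ideal.subset_span (by simp)

theorem cast_choose_eq_zero_of_add_pow_eq_zero {F : Type*} [Field F] {r s m k : ℕ}
    (h : (xq F r s + yq F r s) ^ m = 0) (hkm : k ≤ m) (hkr : k < r) (hks : m - k < s) :
    (m.choose k : F) = 0 := by
  rw [xq, yq, ← map_add, ← map_pow, Ideal.Quotient.eq_zero_iff_mem] at h
  rw [← coeff_X_add_X_pow (Fin.zero_ne_one) hkm]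
  exact coeff_eq_zero_of_mem_Irs h (by simpa using hkr) (by simpa using hks)

theorem add_pow_eq_sum_Ico_of_pow_eq_zero {R : Type*} [CommSemiring R] {x y : R} {r s m : ℕ}
    (hx : x ^ r = 0) (hy : y ^ s = 0) (hrm : r ≤ m + 1) :
    (x + y) ^ m = ∑ k ∈ Ico (m + 1 - s) r, x ^ k * y ^ (m - k) * m.choose k := by
  rw [add_pow]
  refine (sum_subset (fun k hk => mem_range.2 ((mem_Ico.1 hk).2.trans_le hrm)) ?_).symm
  intro k _ hk
  rcases not_and_or.1 (mt mem_Ico.2 hk) with hks | hkr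
  · rw [pow_eq_zero_of_le (by omega) hy, mul_zero, zero_mul]
  · rw [pow_eq_zero_of_le (not_lt.1 hkr) hx, zero_mul, zero_mul]

theorem neg_one_pow_mul_cast_choose_eq {R : Type*} [Ring R] {N a b k : ℕ}
    (h : ∀ j, a < j → j ≤ b → ((N + 1).choose j : R) = 0) (hak : a ≤ k) (hkb : k ≤ b) :
    (-1) ^ k * (N.choose k : R) = (-1) ^ b * N.choose b := by
  refine Nat.decreasingInduction' (fun j hjb hkj ih => ?_) hkb rfl
  rw [← ih]
  have hpascal : (N.choose j : R) + N.choose (j + 1) = 0 := by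
    rw [← Nat.cast_add, ← Nat.choose_succ_succ', h (j + 1) (by omega) hjb]
  rw [pow_succ, eq_neg_of_add_eq_zero_right hpascal, mul_neg_one, neg_mul_neg]

theorem stmt3_general (F : Type*) [Field F] (r s : ℕ) (hr : 1 ≤ r) (hrs : r ≤ s)
    (n : ℕ) (h0 : (xq F r s + yq F r s) ^ n = 0)
    (hmin : ∀ m : ℕ, 0 < m → m < n → (xq F r s + yq F r s) ^ m ≠ 0) :
    (xq F r s + yq F r s) ^ (n - 1) =
      (-1 : Aq F r s) ^ (r - 1) * ((n - 1).choose (r - 1) : Aq F r s) *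
        ∑ i ∈ Finset.Ico (n - s) r, (-(xq F r s)) ^ i * yq F r s ^ (n - 1 - i) ∧
    ((n - 1).choose (r - 1) : F) ≠ 0 := by
  have hchoose {k : ℕ} (hkn : k ≤ n) (hkr : k < r) (hks : n - k < s) : (n.choose k : F) = 0 :=
    cast_choose_eq_zero_of_add_pow_eq_zero h0 hkn hkr hks
  have hrn : r ≤ n := by
    by_contra! hnr
    simpa using hchoose le_rfl hnr (by omega)
  obtain ⟨N, rfl⟩ : ∃ N, n = N + 1 := ⟨n - 1, by omega⟩
  simp only [Nat.add_sub_cancel]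
  have hsign {k : ℕ} (hk : k ∈ Ico (N + 1 - s) r) :
      (-1) ^ k * (N.choose k : Aq F r s) = (-1) ^ (r - 1) * N.choose (r - 1) := by
    obtain ⟨hsk, hkr⟩ := mem_Ico.1 hk
    refine neg_one_pow_mul_cast_choose_eq (fun j hj hjr => ?_) hsk (by omega)
    rw [← map_natCast (algebraMap F (Aq F r s)), hchoose (by omega) (by omega) (by omega),
      map_zero]
  have hexpand : (xq F r s + yq F r s) ^ N =
      (-1 : Aq F r s) ^ (r - 1) * (N.choose (r - 1) : Aq F r s) *
        ∑ i ∈ Ico (N + 1 - s) r, (-(xq F r s)) ^ i * yq F r s ^ (N - i) := by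
    rw [add_pow_eq_sum_Ico_of_pow_eq_zero (xq_pow_eq_zero F r s) (yq_pow_eq_zero F r s) hrn,
      mul_sum]
    refine sum_congr rfl fun k hk => ?_
    have hsq : ((-1 : Aq F r s) ^ k) * (-1) ^ k = 1 := by rw [← mul_pow]; norm_num
    rw [← hsign hk, neg_pow (xq F r s)]
    linear_combination (-(xq F r s ^ k * yq F r s ^ (N - k) * N.choose k)) * hsq
  refine ⟨hexpand, fun hzero => ?_⟩
  rcases Nat.eq_zero_or_pos N with rfl | hN
  · simp [show r = 1 by omega] at hzero
  · have hzeroA : (N.choose (r - 1) : Aq F r s) = 0 := by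
      rw [← map_natCast (algebraMap F (Aq F r s)), hzero, map_zero]
    exact hmin N hN N.lt_succ_self (by rw [hexpand, hzeroA, mul_zero, zero_mul])

/-- If `n` is the least positive integer with `(x+y)^n = 0`, then
`(x+y)^{n-1} = (-1)^{r-1} C(n-1,r-1) ∑_{i=n-s}^{r-1} (-x)^i y^{n-1-i}` and
`C(n-1, r-1) ≠ 0` in `F`. -/
theorem stmt3 (F : Type*) [Field F] (r s : ℕ) (hr : 1 ≤ r) (hrs : r ≤ s)
    (n : ℕ) (hn : 0 < n) (h0 : (xq F r s + yq F r s) ^ n = 0)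
    (hmin : ∀ m : ℕ, 0 < m → m < n → (xq F r s + yq F r s) ^ m ≠ 0) :
    (xq F r s + yq F r s) ^ (n - 1) =
      (-1 : Aq F r s) ^ (r - 1) * ((n - 1).choose (r - 1) : Aq F r s) *
        ∑ i ∈ Finset.Ico (n - s) r, (-(xq F r s)) ^ i * yq F r s ^ (n - 1 - i) ∧
    ((n - 1).choose (r - 1) : F) ≠ 0 :=
  stmt3_general F r s hr hrs n h0 hmin
end

section
/- For any field F of characteristic p \u2265 0 and 1 \u2264 r \u2264 s, the Jordan partition \u03bb(r,s,p) of J_r \u2297 J_s has exactly r nonzero parts; equivalently, the Jordan canonical form of J_r \u2297 J_s has exactly r Jordan blocks. -/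
/-!
The Jordan type of a nilpotent endomorphism `f` is read off the ranks of its powers: with
`D m = dim (range f^m ⊓ ker f) = rank f^m - rank f^(m+1)`, which is antitone, the conjugate
partition `lam i = #{m | i < D m}` has `D 0 = dim ker f` parts and `rank f^k = ∑ i, (lam i - k)`.
So it suffices to show that `N = J_r ⊗ J_s - 1` is nilpotent with an `r`-dimensional kernel.

On a vector `v` indexed by the `r × s` grid, `(N v)(i, j) = v(i, j+1) + v(i+1, j) + v(i+1, j+1)`,
entries outside the grid being `0`. This strictly raises `i + j`, so `N` is nilpotent, and a kernel
vector is determined, row by row from the bottom, by its first column. Conversely every first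
column occurs: in the solution of the recursion, row `a` (counted from the bottom) vanishes beyond
column `a`, so the equations at the last column hold because `r ≤ s`.
-/

open Matrix Kronecker

/-- The `k × k` upper-triangular Jordan block with eigenvalue `1`. -/
def jordanBlock (F : Type*) [Zero F] [One F] (k : ℕ) : Matrix (Fin k) (Fin k) F :=
  Matrix.of fun i j => if j = i then 1 else if (j : ℕ) = (i : ℕ) + 1 then 1 else 0

/-- `lam : Fin r → ℕ` is the Jordan partition of the square matrix `M`
(with eigenvalue 1), characterized by: `lam` is weakly decreasing with positive
parts, and for every `k` the rank of `(M - 1)^k` equals `∑ i, max (lam i - k) 0`.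
Over a field this holds iff `M` is similar to the direct sum of the unipotent
Jordan blocks `J_{lam i}`. -/
def IsJordanSeq {F : Type*} [CommRing F] {n : Type*} [Fintype n] [DecidableEq n]
    {r : ℕ} (M : Matrix n n F) (lam : Fin r → ℕ) : Prop :=
  Antitone lam ∧ (∀ i, 0 < lam i) ∧
    ∀ k : ℕ, ((M - 1) ^ k).rank = ∑ i, (lam i - k)

open Module LinearMap Finset

theorem exists_antitone_sum_tsub_eq_sum_Ico {D : ℕ → ℕ} (hD : Antitone D) {K : ℕ}
    (hK : D K = 0) :
    ∃ lam : Fin (D 0) → ℕ, Antitone lam ∧ (∀ i, 0 < lam i) ∧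
      ∀ k, ∑ i, (lam i - k) = ∑ m ∈ Ico k K, D m := by
  have hex (i : ℕ) : ∃ m, D m ≤ i := ⟨K, hK ▸ i.zero_le⟩
  let lam : Fin (D 0) → ℕ := fun i => Nat.find (hex i)
  have lt_lam_iff (i : Fin (D 0)) (m : ℕ) : m < lam i ↔ i < D m := by
    simp only [lam, Nat.lt_find_iff, not_le]
    exact ⟨fun h => h m le_rfl, fun h n hn => h.trans_le (hD hn)⟩
  have lam_le (i : Fin (D 0)) : lam i ≤ K := Nat.find_min' _ (by rw [hK]; exact i.val.zero_le)
  refine ⟨lam, fun i j hij => Nat.find_mono fun m hm => hm.trans hij,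
    fun i => (lt_lam_iff i 0).2 i.isLt, fun k => ?_⟩
  let inDiagram (i : Fin (D 0)) (m : ℕ) : Prop := i < D m
  have tsub_eq (i : Fin (D 0)) : lam i - k = #((Ico k K).bipartiteAbove inDiagram i) := by
    simp_rw [bipartiteAbove, inDiagram, ← lt_lam_iff, Ico_filter_lt, min_eq_right (lam_le i),
      Nat.card_Ico]
  have card_eq (m : ℕ) : #((univ : Finset (Fin (D 0))).bipartiteBelow inDiagram m) = D m := by
    rw [bipartiteBelow, Fin.card_filter_val_lt, min_eq_right (hD m.zero_le)]
  simp_rw [tsub_eq, sum_card_bipartiteAbove_eq_sum_card_bipartiteBelow, card_eq]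

theorem Submodule.finrank_map_add_finrank_inf_ker {K V W : Type*} [DivisionRing K]
    [AddCommGroup V] [Module K V] [AddCommGroup W] [Module K W] [FiniteDimensional K V]
    (f : V →ₗ[K] W) (p : Submodule K V) :
    finrank K (p.map f) + finrank K ↥(p ⊓ ker f) = finrank K p := by
  rw [← range_domRestrict, ← map_comap_subtype, finrank_map_subtype_eq, ← ker_domRestrict,
    finrank_range_add_finrank_ker]

namespace Module.End

variable {K V : Type*} [DivisionRing K] [AddCommGroup V] [Module K V] [FiniteDimensional K V]

theorem finrank_range_pow_succ_add (f : End K V) (m : ℕ) :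
    finrank K (range (f ^ (m + 1))) + finrank K ↥(range (f ^ m) ⊓ ker f) =
      finrank K (range (f ^ m)) := by
  rw [pow_succ', mul_eq_comp, range_comp, Submodule.finrank_map_add_finrank_inf_ker]

theorem finrank_range_pow_eq_sum_Ico {f : End K V} {N : ℕ} (hN : f ^ N = 0) (k : ℕ) :
    finrank K (range (f ^ k)) = ∑ m ∈ Ico k N, finrank K ↥(range (f ^ m) ⊓ ker f) := by
  obtain hkN | hNk := le_total k N
  · induction hkN using Nat.decreasingInduction with
    | self => simp [hN]
    | of_succ k hk ih =>
      rw [← finrank_range_pow_succ_add, ih, sum_eq_sum_Ico_succ_bot hk, add_comm]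
  · rw [Ico_eq_empty_of_le hNk, sum_empty, ← Nat.sub_add_cancel hNk, pow_add, hN, mul_zero,
      LinearMap.range_zero, finrank_bot]

theorem exists_jordanPartition_of_isNilpotent {f : End K V} (hf : IsNilpotent f) :
    ∃ lam : Fin (finrank K (ker f)) → ℕ, Antitone lam ∧ (∀ i, 0 < lam i) ∧
      ∀ k, finrank K (range (f ^ k)) = ∑ i, (lam i - k) := by
  obtain ⟨N, hN⟩ := hf
  let D : ℕ → ℕ := fun m => finrank K ↥(range (f ^ m) ⊓ ker f)
  have hD : Antitone D := fun m n hmn =>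
    Submodule.finrank_mono (inf_le_inf_right _ (f.iterateRange.monotone hmn))
  have hDN : D N = 0 := by simp [D, hN]
  have hD0 : D 0 = finrank K (ker f) := by
    change finrank K ↥(range (f ^ 0) ⊓ ker f) = _
    rw [pow_zero, one_eq_id, LinearMap.range_id, top_inf_eq]
  have h := exists_antitone_sum_tsub_eq_sum_Ico hD hDN
  rw [hD0] at h
  obtain ⟨lam, hanti, hpos, hsum⟩ := h
  exact ⟨lam, hanti, hpos, fun k => (finrank_range_pow_eq_sum_Ico hN k).trans (hsum k).symm⟩

end Module.End

theorem Matrix.exists_isJordanSeq_of_isNilpotent {F n : Type*} [Field F] [Fintype n]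
    [DecidableEq n] {M : Matrix n n F} (hM : IsNilpotent (M - 1)) :
    ∃ lam : Fin (finrank F (ker (M - 1).toLin')) → ℕ, IsJordanSeq M lam := by
  obtain ⟨lam, hanti, hpos, hrank⟩ :=
    Module.End.exists_jordanPartition_of_isNilpotent (hM.map Matrix.toLinAlgEquiv')
  refine ⟨lam, hanti, hpos, fun k => ?_⟩
  rw [Matrix.rank, ← toLin'_apply', toLin'_pow]
  exact hrank k

section KroneckerJordan

variable {r s : ℕ}

def zeroExtend {α : Type*} [Zero α] (v : Fin r × Fin s → α) (i j : ℕ) : α :=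
  if h : i < r ∧ j < s then v (⟨i, h.1⟩, ⟨j, h.2⟩) else 0

theorem zeroExtend_val {α : Type*} [Zero α] (v : Fin r × Fin s → α) (p : Fin r × Fin s) :
    zeroExtend v p.1 p.2 = v p := by
  simp [zeroExtend]

theorem sum_ite_val_eq_zeroExtend {α : Type*} [AddCommMonoid α] (v : Fin r × Fin s → α)
    (i j : ℕ) :
    ∑ p : Fin r × Fin s, (if (p.1 : ℕ) = i ∧ (p.2 : ℕ) = j then v p else 0) =
      zeroExtend v i j := by
  unfold zeroExtend
  split_ifs with h
  · rw [sum_eq_single_of_mem (⟨i, h.1⟩, ⟨j, h.2⟩) (mem_univ _)]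
    · simp
    · rintro ⟨a, b⟩ _ hab
      rw [if_neg]
      rintro ⟨rfl, rfl⟩
      exact hab rfl
  · refine sum_eq_zero fun p _ => if_neg ?_
    rintro ⟨rfl, rfl⟩
    exact h ⟨p.1.isLt, p.2.isLt⟩

variable {R : Type*} [Ring R]

theorem jordanBlock_apply (k : ℕ) (i a : Fin k) :
    jordanBlock R k i a =
      (if (a : ℕ) = i then 1 else 0) + (if (a : ℕ) = i + 1 then 1 else 0) := by
  simp only [jordanBlock, of_apply, Fin.ext_iff]
  split_ifs <;> first | omega | simp

theorem kronecker_jordanBlock_sub_one_apply (i : Fin r) (j : Fin s) (p : Fin r × Fin s) :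
    (jordanBlock R r ⊗ₖ jordanBlock R s - 1) (i, j) p =
      (if (p.1 : ℕ) = i ∧ (p.2 : ℕ) = j + 1 then 1 else 0) +
      (if (p.1 : ℕ) = i + 1 ∧ (p.2 : ℕ) = j then 1 else 0) +
      (if (p.1 : ℕ) = i + 1 ∧ (p.2 : ℕ) = j + 1 then 1 else 0) := by
  simp only [Matrix.sub_apply, kroneckerMap_apply, jordanBlock_apply, one_apply, Prod.ext_iff,
    Fin.ext_iff]
  split_ifs <;> first | omega | simp

theorem zeroExtend_kronecker_jordanBlock_sub_one_mulVec (v : Fin r × Fin s → R) (i j : ℕ) :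
    zeroExtend ((jordanBlock R r ⊗ₖ jordanBlock R s - 1) *ᵥ v) i j =
      zeroExtend v i (j + 1) + zeroExtend v (i + 1) j + zeroExtend v (i + 1) (j + 1) := by
  by_cases h : i < r ∧ j < s
  · rw [zeroExtend, dif_pos h]
    simp only [mulVec, dotProduct, kronecker_jordanBlock_sub_one_apply, add_mul, ite_mul,
      one_mul, zero_mul, sum_add_distrib, sum_ite_val_eq_zeroExtend]
  · simp only [zeroExtend, dif_neg h]
    rw [dif_neg (by omega), dif_neg (by omega), dif_neg (by omega), add_zero, add_zero]

theorem zeroExtend_kronecker_jordanBlock_sub_one_pow_mulVec (k : ℕ) (v : Fin r × Fin s → R)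
    {i j : ℕ} (h : r + s ≤ i + j + k + 1) :
    zeroExtend ((jordanBlock R r ⊗ₖ jordanBlock R s - 1) ^ k *ᵥ v) i j = 0 := by
  induction k generalizing i j with
  | zero => rw [pow_zero, one_mulVec, zeroExtend, dif_neg (by omega)]
  | succ k ih =>
    rw [pow_succ', ← mulVec_mulVec, zeroExtend_kronecker_jordanBlock_sub_one_mulVec,
      ih (by omega), ih (by omega), ih (by omega), add_zero, add_zero]

theorem isNilpotent_kronecker_jordanBlock_sub_one :
    IsNilpotent (jordanBlock R r ⊗ₖ jordanBlock R s - 1) :=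
  ⟨r + s, ext_iff_mulVec.2 fun v => funext fun p => by
    rw [← zeroExtend_val (_ *ᵥ v) p,
      zeroExtend_kronecker_jordanBlock_sub_one_pow_mulVec _ _ (by omega), zero_mulVec,
      Pi.zero_apply]⟩

theorem kronecker_jordanBlock_sub_one_mulVec_eq_zero_iff (v : Fin r × Fin s → R) :
    (jordanBlock R r ⊗ₖ jordanBlock R s - 1) *ᵥ v = 0 ↔
      ∀ i j,
        zeroExtend v i (j + 1) + zeroExtend v (i + 1) j + zeroExtend v (i + 1) (j + 1) = 0 := by
  refine ⟨fun hv i j => ?_, fun hv => funext fun p => ?_⟩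
  · rw [← zeroExtend_kronecker_jordanBlock_sub_one_mulVec, hv]
    simp [zeroExtend]
  · rw [← zeroExtend_val (_ *ᵥ v) p, zeroExtend_kronecker_jordanBlock_sub_one_mulVec, hv,
      Pi.zero_apply]

theorem eq_zero_of_kronecker_jordanBlock_sub_one_mulVec_eq_zero (hs : 0 < s)
    {v : Fin r × Fin s → R} (hv : (jordanBlock R r ⊗ₖ jordanBlock R s - 1) *ᵥ v = 0)
    (h0 : ∀ i, v (i, ⟨0, hs⟩) = 0) : v = 0 := by
  rw [kronecker_jordanBlock_sub_one_mulVec_eq_zero_iff] at hv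
  have low_rows_eq_zero : ∀ n i j, r ≤ i + n → zeroExtend v i j = 0 := by
    intro n
    induction n with
    | zero => intro i j hi; rw [zeroExtend, dif_neg (by omega)]
    | succ n ih =>
      rintro i (_ | j) hi
      · unfold zeroExtend
        split_ifs with h
        exacts [h0 ⟨i, h.1⟩, rfl]
      · rw [eq_neg_of_add_eq_zero_left ((add_assoc _ _ _).symm.trans (hv i j)),
          ih (i + 1) j (by omega), ih (i + 1) (j + 1) (by omega), add_zero, neg_zero]
  exact funext fun p => by rw [← zeroExtend_val v p, low_rows_eq_zero r _ _ (by omega),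
    Pi.zero_apply]

/-- The kernel vector with first column `c`, rows counted from the bottom: the recursion is the
kernel equation solved for `v (i, j + 1)`. -/
def kernelEntry (c : ℕ → R) : ℕ → ℕ → R
  | a, 0 => c a
  | 0, _ + 1 => 0
  | a + 1, j + 1 => -(kernelEntry c a j + kernelEntry c a (j + 1))

theorem kernelEntry_eq_zero_of_lt (c : ℕ → R) {a j : ℕ} (h : a < j) :
    kernelEntry c a j = 0 := by
  induction a generalizing j with
  | zero => obtain ⟨j, rfl⟩ : ∃ j', j = j' + 1 := ⟨j - 1, by omega⟩; rfl
  | succ a ih =>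
    obtain ⟨j, rfl⟩ : ∃ j', j = j' + 1 := ⟨j - 1, by omega⟩
    rw [kernelEntry, ih (by omega), ih (by omega), add_zero, neg_zero]

theorem exists_kronecker_jordanBlock_sub_one_mulVec_eq_zero (hs : 0 < s) (hrs : r ≤ s)
    (c : Fin r → R) :
    ∃ v, (jordanBlock R r ⊗ₖ jordanBlock R s - 1) *ᵥ v = 0 ∧
      ∀ i, v (i, ⟨0, hs⟩) = c i := by
  let e : ℕ → R := fun a => if h : a < r then c (Fin.rev ⟨a, h⟩) else 0
  let v : Fin r × Fin s → R := fun p => kernelEntry e p.1.rev p.2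
  have hv (i j : ℕ) : zeroExtend v i j = if i < r then kernelEntry e (r - (i + 1)) j else 0 := by
    unfold zeroExtend
    split_ifs with h h'
    · rfl
    · exact absurd h.1 h'
    · exact (kernelEntry_eq_zero_of_lt e (by omega)).symm
    · rfl
  refine ⟨v, (kronecker_jordanBlock_sub_one_mulVec_eq_zero_iff v).2 fun i j => ?_, fun i => ?_⟩
  · rw [hv, hv, hv]
    by_cases hi : i + 1 < r
    · obtain ⟨a, ha⟩ : ∃ a, r - (i + 1) = a + 1 := ⟨r - (i + 1 + 1), by omega⟩
      rw [if_pos (by omega), if_pos hi, if_pos hi, ha, show r - (i + 1 + 1) = a by omega,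
        kernelEntry]
      abel
    · rw [if_neg hi, if_neg hi, add_zero, add_zero]
      split_ifs
      · rw [show r - (i + 1) = 0 by omega]
        rfl
      · rfl
  · change kernelEntry e i.rev 0 = c i
    rw [kernelEntry, show e i.rev = c i.rev.rev from dif_pos i.rev.isLt, Fin.rev_rev]

theorem finrank_ker_kronecker_jordanBlock_sub_one {F : Type*} [Field F] (hs : 0 < s)
    (hrs : r ≤ s) : finrank F (ker (jordanBlock F r ⊗ₖ jordanBlock F s - 1).toLin') = r := by
  let firstColumn : ker (jordanBlock F r ⊗ₖ jordanBlock F s - 1).toLin' →ₗ[F] Fin r → F :=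
    funLeft F F (fun i => (i, ⟨0, hs⟩)) ∘ₗ (ker _).subtype
  have hbij : Function.Bijective firstColumn := by
    refine ⟨(injective_iff_map_eq_zero _).2 fun v hv => Subtype.ext ?_, fun c => ?_⟩
    · exact eq_zero_of_kronecker_jordanBlock_sub_one_mulVec_eq_zero hs v.2 (congrFun hv)
    · obtain ⟨v, hv, hc⟩ := exists_kronecker_jordanBlock_sub_one_mulVec_eq_zero hs hrs c
      exact ⟨⟨v, hv⟩, funext hc⟩
  rw [(LinearEquiv.ofBijective firstColumn hbij).finrank_eq, finrank_fin_fun]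

end KroneckerJordan

/-- Over any field, the Jordan canonical form of `J_r ⊗ J_s` (for `1 ≤ r ≤ s`)
has exactly `r` Jordan blocks: there is a Jordan partition with exactly `r`
(necessarily positive) parts. -/
theorem stmt6 (F : Type*) [Field F] (r s : ℕ) (hr : 1 ≤ r) (hrs : r ≤ s) :
    ∃ lam : Fin r → ℕ, IsJordanSeq (jordanBlock F r ⊗ₖ jordanBlock F s) lam := by
  have h := Matrix.exists_isJordanSeq_of_isNilpotent
    (isNilpotent_kronecker_jordanBlock_sub_one (R := F) (r := r) (s := s))
  rwa [finrank_ker_kronecker_jordanBlock_sub_one (hr.trans hrs) hrs] at h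
end

section
/- Suppose F has characteristic p > 0 and 1 \u2264 r \u2264 s. Let k \u2265 1 be minimal such that p does not divide the binomial coefficient C(r+s-1-k, r-1). Then the largest part of the Jordan partition \u03bb(r,s,p) is \u03bb_1 = r+s-k, and this part occurs with multiplicity exactly k in \u03bb(r,s,p). -/
open Matrix Kronecker

/-!
Write `N_n = J_n - 1` and `m = r + s - 1 - k`. Conjugating by the block-diagonal matrix with
blocks `J_r ^ j` (the automorphism `y ↦ (1 + x) y` of `F[x, y] / (x^r, y^s)`) turns
`J_r ⊗ J_s - 1 = x + y + x y` into `Y = N_r ⊗ 1 + 1 ⊗ N_s = x + y`, whose `n`-th power has the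
entry `C(n, i' - i)` at `((i, j), (i', j'))` when `i' + j' = i + j + n`.

The hypothesis `C(m + t, r - 1) = 0` in `F` for `1 ≤ t < k`, pushed down by Pascal's rule, gives
`C(m, r - 1 - d) = (-1)^d C(m, r - 1)` and `C(m + 1, r - 1 - d) = 0` on a triangle of size `k`.
Hence `Y ^ (m + 1) = 0`, while `Y ^ m` factors through the `k` anti-diagonals `i + j < k` and has
a nonzero scalar `k × k` minor, so its rank is `k`. Since `rank ((M - 1)^n) = ∑ (λ_i - n)`, all
parts are at most `m + 1` and exactly `k` of them equal `m + 1`.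
-/

theorem cast_choose_add_sub_of_cast_choose_add_eq_zero {R : Type*} [Ring R] {m u k : ℕ}
    (hvan : ∀ t, 1 ≤ t → t < k → ((m + t).choose u : R) = 0) :
    ∀ d ≤ u, ∀ t, t + d < k →
      ((m + t).choose (u - d) : R) = if t = 0 then (-1) ^ d * (m.choose u : R) else 0 := by
  intro d
  induction d with
  | zero =>
    intro _ t ht
    rcases Nat.eq_zero_or_pos t with rfl | ht0
    · simp
    · simpa [ht0.ne'] using hvan t ht0 (by omega)
  | succ d ih =>
    intro hdu t ht
    have hpascal := Nat.choose_succ_succ' (m + t) (u - (d + 1))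
    rw [show u - (d + 1) + 1 = u - d by omega] at hpascal
    have hnext : ((m + (t + 1)).choose (u - d) : R) = 0 := by
      simpa using ih (by omega) (t + 1) (by omega)
    rw [← add_assoc, hpascal, Nat.cast_add, ih (by omega) t (by omega)] at hnext
    rw [eq_neg_of_add_eq_zero_left hnext]
    split_ifs <;> simp [pow_succ]

theorem antitone_head_eq_and_card_eq_of_sum_tsub {r : ℕ} (lam : Fin r → ℕ) (hmono : Antitone lam)
    (hr : 1 ≤ r) {n k : ℕ} (hk : 1 ≤ k) (htop : ∑ i, (lam i - (n + 1)) = 0)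
    (hnext : ∑ i, (lam i - n) = k) :
    lam ⟨0, hr⟩ = n + 1 ∧ (Finset.univ.filter fun i => lam i = n + 1).card = k := by
  have hle : ∀ i, lam i ≤ n + 1 := fun i => by
    have := Finset.sum_eq_zero_iff.mp htop i (Finset.mem_univ i)
    omega
  have hcard : (Finset.univ.filter fun i => lam i = n + 1).card = k := by
    rw [Finset.card_filter, ← hnext]
    refine Finset.sum_congr rfl fun i _ => ?_
    have := hle i
    split_ifs <;> omega
  refine ⟨?_, hcard⟩
  obtain ⟨i, hi⟩ := Finset.card_pos.mp (hcard ▸ hk : 0 < _)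
  have := hmono (show (⟨0, hr⟩ : Fin r) ≤ i from Nat.zero_le _)
  have := hle ⟨0, hr⟩
  have := (Finset.mem_filter.mp hi).2
  omega

theorem Matrix.kronecker_pow {R m n : Type*} [CommSemiring R] [Fintype m] [DecidableEq m]
    [Fintype n] [DecidableEq n] (A : Matrix m m R) (B : Matrix n n R) (k : ℕ) :
    (A ⊗ₖ B) ^ k = (A ^ k) ⊗ₖ (B ^ k) := by
  induction k with
  | zero => simp
  | succ k ih => rw [pow_succ, ih, ← Matrix.mul_kronecker_mul, ← pow_succ, ← pow_succ]

section CommRing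

variable {R : Type*} [CommRing R]

theorem jordanBlock_sub_one_apply (n : ℕ) (i j : Fin n) :
    (jordanBlock R n - 1) i j = if (j : ℕ) = i + 1 then 1 else 0 := by
  by_cases hij : i = j
  · subst hij; simp [jordanBlock]
  · simp [jordanBlock, hij, Ne.symm hij]

theorem jordanBlock_sub_one_pow_apply (n a : ℕ) (i j : Fin n) :
    ((jordanBlock R n - 1) ^ a) i j = if (j : ℕ) = i + a then 1 else 0 := by
  induction a generalizing j with
  | zero => simp [Matrix.one_apply, Fin.ext_iff, eq_comm]
  | succ a ih =>
    rw [pow_succ, Matrix.mul_apply]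
    simp only [ih, jordanBlock_sub_one_apply, ite_mul, one_mul, zero_mul]
    rw [Fin.sum_univ_eq_sum_range (fun l => if l = (i : ℕ) + a then
      (if (j : ℕ) = l + 1 then (1 : R) else 0) else 0), Finset.sum_ite_eq']
    have := j.isLt
    split_ifs <;> first | rfl | (simp at *; omega)

theorem det_jordanBlock (n : ℕ) : (jordanBlock R n).det = 1 := by
  have htri : (jordanBlock R n).IsUpperTriangular := fun i j hij => by
    have hij : (j : ℕ) < i := hij
    simp [jordanBlock, Fin.ext_iff, hij.ne, show (j : ℕ) ≠ i + 1 by omega]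
  rw [Matrix.det_of_isUpperTriangular htri]
  simp [jordanBlock]

variable (R) in
def kroneckerNilSum (r s : ℕ) : Matrix (Fin r × Fin s) (Fin r × Fin s) R :=
  (jordanBlock R r - 1) ⊗ₖ 1 + 1 ⊗ₖ (jordanBlock R s - 1)

theorem kroneckerNilSum_pow_apply (r s n : ℕ) (i i' : Fin r) (j j' : Fin s) :
    (kroneckerNilSum R r s ^ n) (i, j) (i', j') =
      if (i : ℕ) ≤ i' ∧ (j : ℕ) ≤ j' ∧ (i' + j' : ℕ) = i + j + n then (n.choose (i' - i) : R)
      else 0 := by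
  have hcomm : Commute ((jordanBlock R r - 1) ⊗ₖ (1 : Matrix (Fin s) (Fin s) R))
      ((1 : Matrix (Fin r) (Fin r) R) ⊗ₖ (jordanBlock R s - 1)) := by
    simp only [Commute, SemiconjBy, ← Matrix.mul_kronecker_mul, one_mul, mul_one]
  rw [kroneckerNilSum, hcomm.add_pow', Matrix.sum_apply]
  simp only [Matrix.kronecker_pow, one_pow, ← Matrix.mul_kronecker_mul, one_mul, mul_one,
    Matrix.smul_apply, Matrix.kroneckerMap_apply, jordanBlock_sub_one_pow_apply, mul_ite,
    mul_zero, nsmul_eq_mul]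
  split_ifs with hc
  · refine (Finset.sum_eq_single_of_mem ((i' : ℕ) - i, (j' : ℕ) - j) ?_ ?_).trans ?_
    · rw [Finset.HasAntidiagonal.mem_antidiagonal]; omega
    · rintro ⟨a, b⟩ _ hne
      split_ifs <;> first | rfl | (exfalso; apply hne; ext <;> simp only at * <;> omega)
    · simp only [if_pos (show (j' : ℕ) = j + (j' - j) by omega),
        if_pos (show (i' : ℕ) = i + (i' - i) by omega)]
  · refine Finset.sum_eq_zero fun ⟨a, b⟩ hab => ?_
    have := Finset.HasAntidiagonal.mem_antidiagonal.mp hab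
    split_ifs <;> first | rfl | (exfalso; simp only at *; omega)

theorem jordanBlock_kronecker_jordanBlock_sub_one (r s : ℕ) :
    jordanBlock R r ⊗ₖ jordanBlock R s - 1 =
      (jordanBlock R r - 1) ⊗ₖ 1 + jordanBlock R r ⊗ₖ (jordanBlock R s - 1) := by
  ext
  rw [← Matrix.one_kronecker_one]
  simp only [Matrix.sub_apply, Matrix.add_apply, Matrix.kroneckerMap_apply]
  ring

theorem one_kronecker_mul_blockDiagonal (r s : ℕ) :
    (1 : Matrix (Fin r) (Fin r) R) ⊗ₖ (jordanBlock R s - 1) *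
        Matrix.blockDiagonal (fun j : Fin s => jordanBlock R r ^ (j : ℕ)) =
      Matrix.blockDiagonal (fun j : Fin s => jordanBlock R r ^ (j : ℕ)) *
        jordanBlock R r ⊗ₖ (jordanBlock R s - 1) := by
  ext ⟨i, j⟩ ⟨i', j'⟩
  simp only [Matrix.mul_apply, Fintype.sum_prod_type, Matrix.blockDiagonal_apply,
    Matrix.kroneckerMap_apply, Matrix.one_apply, ite_mul, mul_ite, one_mul, zero_mul, mul_zero,
    Finset.sum_ite_eq, Finset.sum_ite_eq', Finset.mem_univ, if_true]
  simp_rw [← mul_assoc, ← Finset.sum_mul, ← Matrix.mul_apply, ← pow_succ,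
    jordanBlock_sub_one_apply]
  split_ifs with h
  · rw [h, one_mul, mul_one]
  · simp

theorem kroneckerNilSum_mul_blockDiagonal (r s : ℕ) :
    kroneckerNilSum R r s * Matrix.blockDiagonal (fun j : Fin s => jordanBlock R r ^ (j : ℕ)) =
      Matrix.blockDiagonal (fun j : Fin s => jordanBlock R r ^ (j : ℕ)) *
        (jordanBlock R r ⊗ₖ jordanBlock R s - 1) := by
  have hcomm (j : ℕ) : Commute (jordanBlock R r - 1) (jordanBlock R r ^ j) :=
    ((Commute.refl _).sub_left (Commute.one_left _)).pow_right j
  rw [kroneckerNilSum, jordanBlock_kronecker_jordanBlock_sub_one, add_mul, mul_add,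
    one_kronecker_mul_blockDiagonal, Matrix.kronecker_one, ← Matrix.blockDiagonal_mul,
    ← Matrix.blockDiagonal_mul]
  simp only [(hcomm _).eq]

theorem rank_jordanBlock_kronecker_sub_one_pow (r s n : ℕ) :
    ((jordanBlock R r ⊗ₖ jordanBlock R s - 1) ^ n).rank = (kroneckerNilSum R r s ^ n).rank := by
  set G := Matrix.blockDiagonal (fun j : Fin s => jordanBlock R r ^ (j : ℕ))
  have hG : IsUnit G.det := by
    simp [G, Matrix.det_blockDiagonal, Matrix.det_pow, det_jordanBlock]
  have hconj : SemiconjBy G (jordanBlock R r ⊗ₖ jordanBlock R s - 1) (kroneckerNilSum R r s) :=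
    (kroneckerNilSum_mul_blockDiagonal r s).symm
  rw [← Matrix.rank_mul_eq_right_of_isUnit_det G _ hG, (hconj.pow_right n).eq,
    Matrix.rank_mul_eq_left_of_isUnit_det G _ hG]

theorem kroneckerNilSum_pow_eq_zero {r s k : ℕ} (hks : k ≤ s)
    (hvan : ∀ d ≤ r - 1, 1 + d < k → ((r + s - k).choose (r - 1 - d) : R) = 0) :
    kroneckerNilSum R r s ^ (r + s - k) = 0 := by
  ext ⟨i, j⟩ ⟨i', j'⟩
  have := i'.isLt
  have := j'.isLt
  rw [kroneckerNilSum_pow_apply, Matrix.zero_apply]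
  split_ifs with h
  · rw [← hvan (r - 1 - (i' - i)) (by omega) (by omega),
      show r - 1 - (r - 1 - (i' - i)) = i' - i by omega]
  · rfl

theorem kroneckerNilSum_pow_apply_of_alternating {r s k : ℕ} (hkr : k ≤ r) (hks : k ≤ s)
    (halt : ∀ d ≤ r - 1, d < k →
      ((r + s - 1 - k).choose (r - 1 - d) : R) = (-1) ^ d * ((r + s - 1 - k).choose (r - 1)))
    (i i' : Fin r) (j j' : Fin s) :
    (kroneckerNilSum R r s ^ (r + s - 1 - k)) (i, j) (i', j') =
      if (i' + j' : ℕ) = i + j + (r + s - 1 - k) then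
        (-1) ^ (r - 1 - (i' - i)) * ((r + s - 1 - k).choose (r - 1) : R)
      else 0 := by
  have := i'.isLt
  have := j'.isLt
  rw [kroneckerNilSum_pow_apply]
  by_cases h : (i' + j' : ℕ) = i + j + (r + s - 1 - k)
  · rw [if_pos (by omega), if_pos h, ← halt _ (by omega) (by omega),
      show r - 1 - (r - 1 - (i' - i)) = i' - i by omega]
  · rw [if_neg (by omega), if_neg h]

end CommRing

section IsDomain

variable {R : Type*} [CommRing R] [IsDomain R] {r s k : ℕ}

theorem rank_kroneckerNilSum_pow_le_of_alternating (hkr : k ≤ r) (hks : k ≤ s)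
    (halt : ∀ d ≤ r - 1, d < k →
      ((r + s - 1 - k).choose (r - 1 - d) : R) = (-1) ^ d * ((r + s - 1 - k).choose (r - 1))) :
    (kroneckerNilSum R r s ^ (r + s - 1 - k)).rank ≤ k := by
  set m := r + s - 1 - k
  set β : R := (m.choose (r - 1) : R)
  -- a nonzero entry at `((i, j), _)` forces `i + j < k`, and the row is `(-1)^i` times a row of `C`
  let B : Matrix (Fin r × Fin s) (Fin k) R :=
    Matrix.of fun q t => if (q.1 + q.2 : ℕ) = t then (-1) ^ (q.1 : ℕ) else 0
  let C : Matrix (Fin k) (Fin r × Fin s) R :=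
    Matrix.of fun t q => if (q.1 + q.2 : ℕ) = t + m then (-1) ^ (r - 1 - q.1) * β else 0
  have hBC : kroneckerNilSum R r s ^ m = B * C := by
    ext ⟨i, j⟩ ⟨i', j'⟩
    have := i'.isLt
    have := j'.isLt
    rw [kroneckerNilSum_pow_apply_of_alternating hkr hks halt, Matrix.mul_apply]
    simp only [B, C, Matrix.of_apply, ite_mul, zero_mul]
    rw [Fin.sum_univ_eq_sum_range (fun t => if (i + j : ℕ) = t then (-1) ^ (i : ℕ) *
      (if (i' + j' : ℕ) = t + m then (-1) ^ (r - 1 - i') * β else 0) else 0), Finset.sum_ite_eq]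
    by_cases h : (i' + j' : ℕ) = i + j + m
    · rw [if_pos h, if_pos (Finset.mem_range.mpr (by omega)), if_pos h, ← mul_assoc, ← pow_add,
        show (i : ℕ) + (r - 1 - i') = r - 1 - (i' - i) by omega]
    · rw [if_neg h]
      split_ifs <;> simp
  rw [hBC]
  exact (Matrix.rank_mul_le_left B C).trans
    ((Matrix.rank_le_card_width B).trans_eq (Fintype.card_fin k))

theorem le_rank_kroneckerNilSum_pow_of_alternating (hr : 1 ≤ r) (hkr : k ≤ r) (hks : k ≤ s)
    (halt : ∀ d ≤ r - 1, d < k →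
      ((r + s - 1 - k).choose (r - 1 - d) : R) = (-1) ^ d * ((r + s - 1 - k).choose (r - 1)))
    (hβ : ((r + s - 1 - k).choose (r - 1) : R) ≠ 0) :
    k ≤ (kroneckerNilSum R r s ^ (r + s - 1 - k)).rank := by
  let f : Fin k → Fin r × Fin s := fun t => (⟨0, hr⟩, ⟨t, by omega⟩)
  let g : Fin k → Fin r × Fin s := fun t => (⟨r - 1, by omega⟩, ⟨s - k + t, by omega⟩)
  have hsub : (kroneckerNilSum R r s ^ (r + s - 1 - k)).submatrix f g =
      ((r + s - 1 - k).choose (r - 1) : R) • (1 : Matrix (Fin k) (Fin k) R) := by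
    ext t t'
    simp only [Matrix.submatrix_apply, f, g, kroneckerNilSum_pow_apply_of_alternating hkr hks halt,
      Matrix.smul_apply, Matrix.one_apply, Fin.ext_iff, smul_eq_mul, mul_ite, mul_one, mul_zero]
    rw [Nat.sub_zero, Nat.sub_self, pow_zero, one_mul]
    exact if_congr (by omega) rfl rfl
  calc k = (((r + s - 1 - k).choose (r - 1) : R) • (1 : Matrix (Fin k) (Fin k) R)).rank := by
        rw [Matrix.rank_smul_of_mem_nonZeroDivisors _ (mem_nonZeroDivisors_of_ne_zero hβ),
          Matrix.rank_one, Fintype.card_fin]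
    _ ≤ _ := hsub ▸ Matrix.rank_submatrix_le _ f g

theorem kroneckerNilSum_pow_succ_eq_zero_and_rank_pow_eq (hr : 1 ≤ r) (hks : k ≤ s)
    (hvan : ∀ t, 1 ≤ t → t < k → ((r + s - 1 - k + t).choose (r - 1) : R) = 0)
    (hβ : ((r + s - 1 - k).choose (r - 1) : R) ≠ 0) :
    kroneckerNilSum R r s ^ (r + s - 1 - k + 1) = 0 ∧
      (kroneckerNilSum R r s ^ (r + s - 1 - k)).rank = k := by
  have htri := cast_choose_add_sub_of_cast_choose_add_eq_zero hvan
  have hkr : k ≤ r := by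
    by_contra! hrk
    simpa using htri (r - 1) le_rfl 1 (by omega)
  have halt : ∀ d ≤ r - 1, d < k → ((r + s - 1 - k).choose (r - 1 - d) : R) =
      (-1) ^ d * ((r + s - 1 - k).choose (r - 1)) := fun d hd hdk => by
    simpa using htri d hd 0 (by omega)
  refine ⟨?_, le_antisymm (rank_kroneckerNilSum_pow_le_of_alternating hkr hks halt)
    (le_rank_kroneckerNilSum_pow_of_alternating hr hkr hks halt hβ)⟩
  rw [show r + s - 1 - k + 1 = r + s - k by omega]
  exact kroneckerNilSum_pow_eq_zero hks fun d hd hdk => by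
    simpa [show r + s - 1 - k + 1 = r + s - k by omega] using htri d hd 1 (by omega)

end IsDomain

theorem stmt7_general (F : Type*) [Field F] (p : ℕ) [CharP F p]
    (r s : ℕ) (hr : 1 ≤ r) (hrs : r ≤ s) (k : ℕ) (hk : 1 ≤ k)
    (hknd : ¬ p ∣ (r + s - 1 - k).choose (r - 1))
    (hkmin : ∀ j : ℕ, 1 ≤ j → j < k → p ∣ (r + s - 1 - j).choose (r - 1))
    (lam : Fin r → ℕ)
    (hlam : IsJordanSeq (jordanBlock F r ⊗ₖ jordanBlock F s) lam) :
    lam ⟨0, hr⟩ = r + s - k ∧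
    (Finset.univ.filter fun i : Fin r => lam i = r + s - k).card = k := by
  obtain ⟨hmono, -, hrank⟩ := hlam
  have hks : k ≤ s := by
    by_contra! hsk
    have := (CharP.cast_eq_zero_iff F p _).mpr (hkmin s (by omega) hsk)
    rw [show r + s - 1 - s = r - 1 by omega, Nat.choose_self, Nat.cast_one] at this
    exact one_ne_zero this
  have hvan : ∀ t, 1 ≤ t → t < k → ((r + s - 1 - k + t).choose (r - 1) : F) = 0 :=
    fun t ht1 htk => by
      rw [CharP.cast_eq_zero_iff F p, show r + s - 1 - k + t = r + s - 1 - (k - t) by omega]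
      exact hkmin (k - t) (by omega) (by omega)
  have hβ : ((r + s - 1 - k).choose (r - 1) : F) ≠ 0 := by
    rwa [Ne, CharP.cast_eq_zero_iff F p]
  obtain ⟨hzero, hrank_eq⟩ := kroneckerNilSum_pow_succ_eq_zero_and_rank_pow_eq hr hks hvan hβ
  have htop := hrank (r + s - 1 - k + 1)
  have hnext := hrank (r + s - 1 - k)
  rw [rank_jordanBlock_kronecker_sub_one_pow, hzero, Matrix.rank_zero] at htop
  rw [rank_jordanBlock_kronecker_sub_one_pow, hrank_eq] at hnext
  have := antitone_head_eq_and_card_eq_of_sum_tsub lam hmono hr hk htop.symm hnext.symm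
  rwa [show r + s - 1 - k + 1 = r + s - k by omega] at this

/-- If `k ≥ 1` is minimal with `p ∤ C(r+s-1-k, r-1)`, then the largest part of
the Jordan partition of `J_r ⊗ J_s` is `λ_1 = r+s-k`, with multiplicity `k`. -/
theorem stmt7 (F : Type*) [Field F] (p : ℕ) [CharP F p] (hp : p.Prime)
    (r s : ℕ) (hr : 1 ≤ r) (hrs : r ≤ s) (k : ℕ) (hk : 1 ≤ k)
    (hknd : ¬ p ∣ (r + s - 1 - k).choose (r - 1))
    (hkmin : ∀ j : ℕ, 1 ≤ j → j < k → p ∣ (r + s - 1 - j).choose (r - 1))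
    (lam : Fin r → ℕ)
    (hlam : IsJordanSeq (jordanBlock F r ⊗ₖ jordanBlock F s) lam) :
    lam ⟨0, hr⟩ = r + s - k ∧
    (Finset.univ.filter fun i : Fin r => lam i = r + s - k).card = k :=
  stmt7_general F p r s hr hrs k hk hknd hkmin lam hlam
end

section
/- The unipotent matrix J_r \u2297 J_s and the matrix J_r \u2297 I_s + I_r \u2297 J_s have the same Jordan block structure: more precisely, in A = F[X,Y]/(X^r,Y^s), multiplication by (1+x)(1+y) - 1 = x+y+xy is similar as an F-linear map to multiplication by x+y, via the basis change sending x^i y^j to x^i (1+y)^i y^j. -/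
open MvPolynomial

/-!
Since `y` is nilpotent, `1 + y` is a unit, so the substitution `x ↦ x(1+y)`, `y ↦ y` is an
algebra automorphism of `A` (inverse `x ↦ x(1+y)⁻¹`). It sends `x^i y^j` to `x^i (1+y)^i y^j`
and `x + y` to `x + y + xy`; being multiplicative, it conjugates multiplication by `x + y`
into multiplication by `x + y + xy`.
-/

namespace Aq

variable {F : Type*} [Field F] {r s : ℕ}

theorem xq_pow_eq_zero : xq F r s ^ r = 0 := by
  rw [xq, ← map_pow, Ideal.Quotient.eq_zero_iff_mem]
  exact Ideal.subset_span (Set.mem_insert _ _)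

theorem yq_pow_eq_zero : yq F r s ^ s = 0 := by
  rw [yq, ← map_pow, Ideal.Quotient.eq_zero_iff_mem]
  exact Ideal.subset_span (Set.mem_insert_of_mem _ rfl)

section Lift

variable {B : Type*} [CommRing B] [Algebra F B]

noncomputable def lift (v w : B) (hv : v ^ r = 0) (hw : w ^ s = 0) : Aq F r s →ₐ[F] B :=
  Ideal.Quotient.liftₐ _ (aeval ![v, w]) fun p hp => by
    refine RingHom.mem_ker.mp (Ideal.span_le.mpr ?_ hp)
    rintro q (rfl | rfl) <;> simp [RingHom.mem_ker, hv, hw]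

@[simp]
theorem lift_xq (v w : B) (hv : v ^ r = 0) (hw : w ^ s = 0) : lift v w hv hw (xq F r s) = v := by
  change aeval ![v, w] (X 0 : MvPolynomial (Fin 2) F) = v
  simp

@[simp]
theorem lift_yq (v w : B) (hv : v ^ r = 0) (hw : w ^ s = 0) : lift v w hv hw (yq F r s) = w := by
  change aeval ![v, w] (X 1 : MvPolynomial (Fin 2) F) = w
  simp

@[ext]
theorem algHom_ext {f g : Aq F r s →ₐ[F] B} (hx : f (xq F r s) = g (xq F r s))
    (hy : f (yq F r s) = g (yq F r s)) : f = g := by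
  apply Ideal.Quotient.algHom_ext
  apply MvPolynomial.algHom_ext
  intro i
  fin_cases i
  exacts [hx, hy]

end Lift

noncomputable def twistX (c : Aq F r s) : Aq F r s →ₐ[F] Aq F r s :=
  lift (xq F r s * c) (yq F r s) (by rw [mul_pow, xq_pow_eq_zero, zero_mul]) yq_pow_eq_zero

@[simp]
theorem twistX_xq (c : Aq F r s) : twistX c (xq F r s) = xq F r s * c :=
  lift_xq ..

@[simp]
theorem twistX_yq (c : Aq F r s) : twistX c (yq F r s) = yq F r s :=
  lift_yq ..

theorem twistX_one : twistX (1 : Aq F r s) = AlgHom.id F _ := by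
  ext <;> simp

theorem twistX_comp_twistX {c d : Aq F r s} (hd : twistX c d = d) :
    (twistX c).comp (twistX d) = twistX (c * d) := by
  ext <;> simp [hd, mul_assoc]

/-- Satisfied by every polynomial in `y`; it is what makes `x ↦ x * u⁻¹` undo `x ↦ x * u`. -/
def IsFixedOfFixesY (a : Aq F r s) : Prop :=
  ∀ f : Aq F r s →ₐ[F] Aq F r s, f (yq F r s) = yq F r s → f a = a

theorem isFixedOfFixesY_inv {u : (Aq F r s)ˣ} (hu : IsFixedOfFixesY (u : Aq F r s)) :
    IsFixedOfFixesY (↑u⁻¹ : Aq F r s) := by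
  intro f hf
  have hmap : Units.map (f : Aq F r s →* Aq F r s) u = u := Units.ext (hu f hf)
  have := congrArg Units.val (map_inv (Units.map (f : Aq F r s →* Aq F r s)) u)
  rwa [hmap, Units.coe_map] at this

noncomputable def twistXEquiv (u : (Aq F r s)ˣ) (hu : IsFixedOfFixesY (u : Aq F r s)) :
    Aq F r s ≃ₐ[F] Aq F r s :=
  AlgEquiv.ofAlgHom (twistX u) (twistX ↑u⁻¹)
    (by rw [twistX_comp_twistX (isFixedOfFixesY_inv hu _ (twistX_yq _)), u.mul_inv, twistX_one])
    (by rw [twistX_comp_twistX (hu _ (twistX_yq _)), u.inv_mul, twistX_one])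

@[simp]
theorem twistXEquiv_apply (u : (Aq F r s)ˣ) (hu : IsFixedOfFixesY (u : Aq F r s)) (a : Aq F r s) :
    twistXEquiv u hu a = twistX u a :=
  rfl

end Aq

theorem stmt8_general (F : Type*) [Field F] (r s : ℕ) :
    ∃ e : Aq F r s ≃ₗ[F] Aq F r s,
      (∀ i j : ℕ, i < r → j < s →
        e (xq F r s ^ i * yq F r s ^ j) =
          xq F r s ^ i * (1 + yq F r s) ^ i * yq F r s ^ j) ∧
      ∀ a : Aq F r s,
        e a * (xq F r s + yq F r s + xq F r s * yq F r s) =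
          e (a * (xq F r s + yq F r s)) := by
  obtain ⟨u, hu⟩ := (IsNilpotent.isUnit_one_add ⟨s, Aq.yq_pow_eq_zero⟩ : IsUnit (1 + yq F r s))
  have hfix : Aq.IsFixedOfFixesY (u : Aq F r s) := fun f hf => by simp [hu, hf]
  refine ⟨(Aq.twistXEquiv u hfix).toLinearEquiv, fun i j _ _ => ?_, fun a => ?_⟩
  · simp [hu, mul_pow]
  · simp only [AlgEquiv.toLinearEquiv_apply, Aq.twistXEquiv_apply, map_mul, map_add,
      Aq.twistX_xq, Aq.twistX_yq, hu]
    ring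

/-- Multiplication by `(1+x)(1+y) - 1 = x+y+xy` on `A = F[X,Y]/(X^r,Y^s)` is
similar, as an `F`-linear map, to multiplication by `x+y`, via the basis change
sending `x^i y^j` to `x^i (1+y)^i y^j`.  (Hence `J_r ⊗ J_s` and
`J_r ⊗ I_s + I_r ⊗ J_s` have the same Jordan block structure.) -/
theorem stmt8 (F : Type*) [Field F] (r s : ℕ) (hr : 1 ≤ r) (hrs : r ≤ s) :
    ∃ e : Aq F r s ≃ₗ[F] Aq F r s,
      (∀ i j : ℕ, i < r → j < s →
        e (xq F r s ^ i * yq F r s ^ j) =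
          xq F r s ^ i * (1 + yq F r s) ^ i * yq F r s ^ j) ∧
      ∀ a : Aq F r s,
        e a * (xq F r s + yq F r s + xq F r s * yq F r s) =
          e (a * (xq F r s + yq F r s)) :=
  stmt8_general F r s
end

section
/- Combining both directions: for char F = p > 0 and r \u2264 min{p^m, s} with p^{m-1} < r \u2264 p^m, the Jordan partition \u03bb(r,s,p) is the uniform partition (s, \u2026, s) if and only if s \u2261 0 (mod p^m). -/
open Matrix Kronecker

/-! Write `X = J_r ⊗ J_s - 1 = N_r ⊗ J_s + 1 ⊗ N_s`, with `N_k` the nilpotent shift.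
In characteristic `p`, `X ^ p ^ m = 1 ⊗ N_s ^ p ^ m` since `N_r ^ p ^ m = 0`, so `X ^ s = 0`
when `p ^ m ∣ s`; as `X` also has an invertible minor of size `r (s - 1)`, the ranks of its
powers are then forced to be `r (s - k)`. Conversely, the partition `(s, …, s)` forces
`X ^ s = 0`, whereas the entry of `X ^ s` at `((0, 0), (p ^ l, s - p ^ l))` is
`C(s, p ^ l) ≡ s / p ^ l [MOD p]`. For `p ^ l` the exact power of `p` dividing `s` this entry
is nonzero, and if `p ^ m ∤ s` then `p ^ l ≤ p ^ (m - 1) < r`, so the entry exists. -/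

theorem Nat.choose_prime_pow_modEq_div {p : ℕ} [Fact p.Prime] (l s : ℕ) :
    s.choose (p ^ l) ≡ s / p ^ l [MOD p] := by
  induction l generalizing s with
  | zero => simp [Nat.ModEq.refl]
  | succ l ih =>
    have hp := (Fact.out : p.Prime).pos
    calc s.choose (p ^ (l + 1))
        ≡ (s % p).choose (p ^ (l + 1) % p) * (s / p).choose (p ^ (l + 1) / p) [MOD p] :=
          Choose.choose_modEq_choose_mod_mul_choose_div_nat
      _ = (s / p).choose (p ^ l) := by
          rw [pow_succ, Nat.mul_mod_left, Nat.mul_div_cancel _ hp, Nat.choose_zero_right, one_mul]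
      _ ≡ s / p / p ^ l [MOD p] := ih _
      _ = s / p ^ (l + 1) := by rw [Nat.div_div_eq_div_mul, pow_succ']

theorem Nat.not_dvd_choose_pow_padicValNat {p s : ℕ} [Fact p.Prime] (hs : s ≠ 0) :
    ¬ p ∣ s.choose (p ^ padicValNat p s) := by
  intro h
  have hdiv : p ∣ s / p ^ padicValNat p s :=
    (Nat.modEq_zero_iff_dvd.mp ((Nat.choose_prime_pow_modEq_div _ s).symm.trans
      (Nat.modEq_zero_iff_dvd.mpr h)))
  exact pow_succ_padicValNat_not_dvd hs
    (pow_succ p _ ▸ Nat.mul_dvd_of_dvd_div pow_padicValNat_dvd hdiv)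

namespace Matrix

variable {F : Type*} [Field F]

theorem eq_zero_of_rank_eq_zero {m n : Type*} [Fintype n] [DecidableEq n] {A : Matrix m n F}
    (h : A.rank = 0) : A = 0 := by
  have : A.mulVecLin = 0 := LinearMap.range_eq_bot.mp (Submodule.finrank_eq_zero.mp h)
  ext i j
  simpa using congrFun (LinearMap.congr_fun this (Pi.single j 1)) i

theorem rank_add_rank_le_card_add_rank_mul {l m n : Type*} [Fintype m] [Fintype n]
    (A : Matrix l m F) (B : Matrix m n F) :
    A.rank + B.rank ≤ Fintype.card m + (A * B).rank := by
  set W := LinearMap.range B.mulVecLin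
  set f := A.mulVecLin.domRestrict W
  have hrange : LinearMap.range f = LinearMap.range (A * B).mulVecLin := by
    rw [LinearMap.range_domRestrict, mulVecLin_mul, LinearMap.range_comp]
  have hker : Module.finrank F (LinearMap.ker f) ≤ Module.finrank F (LinearMap.ker A.mulVecLin) :=
    calc Module.finrank F (LinearMap.ker f)
        = Module.finrank F ((LinearMap.ker f).map W.subtype) :=
          (Submodule.finrank_map_subtype_eq _ _).symm
      _ ≤ _ := Submodule.finrank_mono (by rintro _ ⟨y, hy, rfl⟩; exact hy)
  have hf := f.finrank_range_add_finrank_ker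
  have hA := A.mulVecLin.finrank_range_add_finrank_ker
  rw [Module.finrank_fintype_fun_eq_card] at hA
  have : (A * B).rank = Module.finrank F (LinearMap.range f) := by rw [hrange]; rfl
  change Module.finrank F (LinearMap.range A.mulVecLin) + Module.finrank F W ≤ _
  omega

theorem rank_pow_eq_of_pow_eq_zero {n : Type*} [Fintype n] [DecidableEq n] {A : Matrix n n F}
    {r s : ℕ} (hcard : Fintype.card n = r * s) (hA : r * (s - 1) ≤ A.rank) (hAs : A ^ s = 0)
    (k : ℕ) : (A ^ k).rank = r * (s - k) := by
  -- Sylvester's inequality bounds `rank (A ^ k)` from below, `A ^ (s - k) * A ^ k = 0` from above.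
  have hlow : ∀ k, r * s ≤ (A ^ k).rank + k * r := by
    intro k
    induction k with
    | zero => simp [hcard]
    | succ k ih =>
      have := rank_add_rank_le_card_add_rank_mul A (A ^ k)
      rw [← pow_succ', hcard] at this
      have := Nat.mul_sub_one r s
      have := add_one_mul k r
      omega
  rcases le_or_gt k s with hks | hsk
  · have hup := rank_add_rank_le_card_of_mul_eq_zero
      (show A ^ (s - k) * A ^ k = 0 by rw [← pow_add, Nat.sub_add_cancel hks, hAs])
    have := hlow k
    have := hlow (s - k)
    have := Nat.mul_sub r s k
    have := Nat.mul_comm r k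
    have := Nat.mul_comm r (s - k)
    have := Nat.mul_le_mul_left r hks
    omega
  · rw [pow_eq_zero_of_le hsk.le hAs, rank_zero, Nat.sub_eq_zero_of_le hsk.le, mul_zero]

theorem kronecker_pow_s11 {R : Type*} [CommSemiring R] {m n : Type*} [Fintype m] [Fintype n]
    [DecidableEq m] [DecidableEq n] (A : Matrix m m R) (B : Matrix n n R) (k : ℕ) :
    (A ⊗ₖ B) ^ k = (A ^ k) ⊗ₖ (B ^ k) := by
  induction k with
  | zero => simp only [pow_zero, one_kronecker_one]
  | succ k ih => rw [pow_succ, pow_succ, pow_succ, ih, mul_kronecker_mul]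

end Matrix

def shiftMatrix (F : Type*) [Zero F] [One F] (k : ℕ) : Matrix (Fin k) (Fin k) F :=
  Matrix.of fun i j => if (j : ℕ) = (i : ℕ) + 1 then 1 else 0

section JordanBlock

variable {F : Type*}

theorem jordanBlock_eq_one_add_shiftMatrix [AddZeroClass F] [One F] (k : ℕ) :
    jordanBlock F k = 1 + shiftMatrix F k := by
  ext i j
  by_cases h : j = i
  · subst h
    simp [jordanBlock, shiftMatrix]
  · simp [jordanBlock, shiftMatrix, h, Ne.symm h]

theorem shiftMatrix_pow_apply [Semiring F] {k : ℕ} (e : ℕ) (i j : Fin k) :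
    (shiftMatrix F k ^ e) i j = if (j : ℕ) = i + e then 1 else 0 := by
  induction e generalizing j with
  | zero => simp [Matrix.one_apply, Fin.ext_iff, eq_comm]
  | succ e ih =>
    rw [pow_succ, Matrix.mul_apply]
    simp only [ih]
    simp only [shiftMatrix, Matrix.of_apply, ite_mul, one_mul, zero_mul]
    by_cases h : (i : ℕ) + e < k
    · rw [Finset.sum_eq_single ⟨i + e, h⟩ (fun c _ hc => if_neg fun h' => hc (Fin.ext h'))
        (by simp)]
      rw [if_pos rfl, add_assoc]
    · rw [Finset.sum_eq_zero fun c _ => if_neg (by omega), if_neg (by omega)]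

theorem shiftMatrix_pow_eq_zero_of_le [Semiring F] {k e : ℕ} (h : k ≤ e) :
    shiftMatrix F k ^ e = 0 := by
  ext i j
  rw [shiftMatrix_pow_apply, Matrix.zero_apply, if_neg (by omega)]

theorem shiftMatrix_submatrix_castSucc_succ [Zero F] [One F] (k : ℕ) :
    (shiftMatrix F (k + 1)).submatrix Fin.castSucc Fin.succ = 1 := by
  ext i j
  simp [shiftMatrix, Matrix.one_apply, Fin.ext_iff, eq_comm]

theorem commute_shiftMatrix_jordanBlock [Semiring F] (k : ℕ) :
    Commute (shiftMatrix F k) (jordanBlock F k) := by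
  rw [jordanBlock_eq_one_add_shiftMatrix]
  exact (Commute.one_right _).add_right (Commute.refl _)

theorem jordanBlock_pow_apply_zero_zero [Semiring F] {k : ℕ} (hk : 0 < k) (a : ℕ) :
    (jordanBlock F k ^ a) ⟨0, hk⟩ ⟨0, hk⟩ = 1 := by
  induction a with
  | zero => simp
  | succ a ih =>
    rw [pow_succ, Matrix.mul_apply, Finset.sum_eq_single ⟨0, hk⟩ _ (by simp), ih]
    · simp [jordanBlock]
    · intro c _ hc
      have hc0 : jordanBlock F k c ⟨0, hk⟩ = 0 := by
        simp [jordanBlock, Ne.symm hc]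
      rw [hc0, mul_zero]

theorem jordanBlock_pow_char_pow [Semiring F] (p : ℕ) [Fact p.Prime] [CharP F p] (k e : ℕ) :
    jordanBlock F k ^ p ^ e = 1 + shiftMatrix F k ^ p ^ e := by
  rcases isEmpty_or_nonempty (Fin k) with hk | hk
  · exact Subsingleton.elim _ _
  · rw [jordanBlock_eq_one_add_shiftMatrix, add_pow_char_pow_of_commute p e (Commute.one_left _),
      one_pow]

section CommRing

variable [CommRing F]

theorem jordanBlock_kronecker_sub_one (r s : ℕ) :
    jordanBlock F r ⊗ₖ jordanBlock F s - 1 =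
      shiftMatrix F r ⊗ₖ jordanBlock F s + (1 : Matrix (Fin r) (Fin r) F) ⊗ₖ shiftMatrix F s := by
  have h : (1 : Matrix (Fin r) (Fin r) F) ⊗ₖ jordanBlock F s = 1 + 1 ⊗ₖ shiftMatrix F s := by
    rw [jordanBlock_eq_one_add_shiftMatrix s, kronecker_add, one_kronecker_one]
  rw [jordanBlock_eq_one_add_shiftMatrix r, add_kronecker, h]
  abel

theorem jordanBlock_kronecker_sub_one_pow_char_pow (p : ℕ) [Fact p.Prime] [CharP F p]
    {r e : ℕ} (s : ℕ) (hr : r ≤ p ^ e) :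
    (jordanBlock F r ⊗ₖ jordanBlock F s - 1) ^ p ^ e =
      (1 : Matrix (Fin r) (Fin r) F) ⊗ₖ (shiftMatrix F s ^ p ^ e) := by
  rcases isEmpty_or_nonempty (Fin r × Fin s) with hrs | hrs
  · exact Subsingleton.elim _ _
  · rw [sub_pow_char_pow_of_commute p e (Commute.one_right _), one_pow, kronecker_pow_s11,
      jordanBlock_pow_char_pow, jordanBlock_pow_char_pow, shiftMatrix_pow_eq_zero_of_le hr,
      add_zero, kronecker_add, one_kronecker_one, add_sub_cancel_left]

theorem jordanBlock_kronecker_sub_one_pow_eq_zero_of_dvd (p : ℕ) [Fact p.Prime] [CharP F p]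
    {r s e : ℕ} (hr : r ≤ p ^ e) (hs : p ^ e ∣ s) :
    (jordanBlock F r ⊗ₖ jordanBlock F s - 1) ^ s = 0 := by
  obtain ⟨c, rfl⟩ := hs
  rw [pow_mul, jordanBlock_kronecker_sub_one_pow_char_pow p _ hr, kronecker_pow_s11, one_pow,
    ← pow_mul, shiftMatrix_pow_eq_zero_of_le le_rfl, kronecker_zero]

theorem jordanBlock_kronecker_sub_one_pow_apply {r s n j : ℕ} (hj : j < r) (hjn : j ≤ n)
    (hns : n - j < s) :
    ((jordanBlock F r ⊗ₖ jordanBlock F s - 1) ^ n)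
        (⟨0, Nat.zero_lt_of_lt hj⟩, ⟨0, Nat.zero_lt_of_lt hns⟩) (⟨j, hj⟩, ⟨n - j, hns⟩) =
      n.choose j := by
  have hcomm : Commute (shiftMatrix F r ⊗ₖ jordanBlock F s)
      ((1 : Matrix (Fin r) (Fin r) F) ⊗ₖ shiftMatrix F s) := by
    rw [Commute, SemiconjBy, ← mul_kronecker_mul, ← mul_kronecker_mul, one_mul, mul_one,
      (commute_shiftMatrix_jordanBlock s).eq]
  have hterm : ∀ i, (shiftMatrix F r ⊗ₖ jordanBlock F s) ^ i *
      ((1 : Matrix (Fin r) (Fin r) F) ⊗ₖ shiftMatrix F s) ^ (n - i) * (n.choose i : _) =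
      n.choose i •
        ((shiftMatrix F r ^ i) ⊗ₖ (jordanBlock F s ^ i * shiftMatrix F s ^ (n - i))) := by
    intro i
    rw [kronecker_pow_s11, kronecker_pow_s11, one_pow, ← mul_kronecker_mul, mul_one, nsmul_eq_mul']
  rw [jordanBlock_kronecker_sub_one, hcomm.add_pow, Matrix.sum_apply,
    Finset.sum_eq_single j _ fun h => absurd (Finset.mem_range.mpr (by omega)) h]
  · rw [hterm, Matrix.smul_apply, kroneckerMap_apply, shiftMatrix_pow_apply, if_pos (by simp),
      Matrix.mul_apply, Finset.sum_eq_single ⟨0, Nat.zero_lt_of_lt hns⟩ _ (by simp),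
      jordanBlock_pow_apply_zero_zero, shiftMatrix_pow_apply, if_pos (by simp)]
    · simp
    · intro c _ hc
      have hc0 : (c : ℕ) ≠ 0 := fun h => hc (Fin.ext h)
      rw [shiftMatrix_pow_apply, if_neg (by simp only; omega), mul_zero]
  · intro i _ hij
    rw [hterm, Matrix.smul_apply, kroneckerMap_apply, shiftMatrix_pow_apply,
      if_neg (by simp only [zero_add]; omega), zero_mul, smul_zero]

end CommRing

theorem le_rank_jordanBlock_kronecker_sub_one [Field F] (r s : ℕ) :
    r * s ≤ (jordanBlock F r ⊗ₖ jordanBlock F (s + 1) - 1).rank := by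
  have hY : (jordanBlock F r ⊗ₖ jordanBlock F (s + 1) - 1).submatrix
      (Prod.map id Fin.castSucc) (Prod.map id Fin.succ) =
      1 + shiftMatrix F r ⊗ₖ (jordanBlock F (s + 1)).submatrix Fin.castSucc Fin.succ := by
    rw [jordanBlock_kronecker_sub_one, submatrix_add, Pi.add_apply, Pi.add_apply,
      ← kroneckerMap_submatrix_submatrix, ← kroneckerMap_submatrix_submatrix, submatrix_id_id,
      submatrix_id_id,
      shiftMatrix_submatrix_castSucc_succ, one_kronecker_one, add_comm]
  have hnil : IsNilpotent
      (shiftMatrix F r ⊗ₖ (jordanBlock F (s + 1)).submatrix Fin.castSucc Fin.succ) :=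
    ⟨r, by rw [kronecker_pow_s11, shiftMatrix_pow_eq_zero_of_le le_rfl, zero_kronecker]⟩
  calc r * s = (1 + shiftMatrix F r ⊗ₖ
        (jordanBlock F (s + 1)).submatrix Fin.castSucc Fin.succ).rank := by
        rw [rank_of_isUnit _ hnil.isUnit_one_add]; simp
    _ ≤ _ := hY ▸ rank_submatrix_le _ _ _

end JordanBlock

/-- For `p^{m-1} < r ≤ min{p^m, s}`, the Jordan partition of `J_r ⊗ J_s` is
the uniform partition `(s, …, s)` if and only if `p^m ∣ s`. -/
theorem stmt11 (F : Type*) [Field F] (p : ℕ) [CharP F p] (hp : p.Prime)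
    (m r s : ℕ) (hm : p ^ (m - 1) < r) (hrpm : r ≤ p ^ m) (hrs : r ≤ s) :
    IsJordanSeq (jordanBlock F r ⊗ₖ jordanBlock F s) (fun _ : Fin r => s) ↔
      p ^ m ∣ s := by
  have := Fact.mk hp
  obtain ⟨s, rfl⟩ : ∃ s', s = s' + 1 := ⟨s - 1, by omega⟩
  constructor
  · rintro ⟨-, -, hrank⟩
    have hX : (jordanBlock F r ⊗ₖ jordanBlock F (s + 1) - 1) ^ (s + 1) = 0 :=
      Matrix.eq_zero_of_rank_eq_zero (by simp [hrank])
    by_contra hdvd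
    have hl : p ^ padicValNat p (s + 1) ≤ s + 1 := Nat.le_of_dvd s.succ_pos pow_padicValNat_dvd
    have hlm : padicValNat p (s + 1) < m := by
      by_contra! h
      exact hdvd ((pow_dvd_pow p h).trans pow_padicValNat_dvd)
    have hlr : p ^ padicValNat p (s + 1) < r :=
      (Nat.pow_le_pow_right hp.pos (by omega)).trans_lt hm
    have hentry := jordanBlock_kronecker_sub_one_pow_apply (F := F) hlr hl
      (Nat.sub_lt s.succ_pos (pow_pos hp.pos _))
    rw [hX, Matrix.zero_apply, eq_comm, CharP.cast_eq_zero_iff F p] at hentry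
    exact Nat.not_dvd_choose_pow_padicValNat s.succ_ne_zero hentry
  · intro hdvd
    refine ⟨antitone_const, fun _ => s.succ_pos, fun k => ?_⟩
    rw [Finset.sum_const, Finset.card_univ, Fintype.card_fin, smul_eq_mul]
    exact Matrix.rank_pow_eq_of_pow_eq_zero (by simp) (le_rank_jordanBlock_kronecker_sub_one r s)
      (jordanBlock_kronecker_sub_one_pow_eq_zero_of_dvd p hrpm hdvd) k
end

section
/- Let D be a principal ideal domain, \u03b1 \u2208 D prime, and D\u0304 = D/(\u03b1^n). Let M be a free D\u0304-module with basis e_1, \u2026, e_r, let 1 \u2264 j \u2264 r, and let N = \u2295_{i=1}^{j} x_i D\u0304 be a submodule of M with Ann(x_i) = (\u03b1^{n_i})/(\u03b1^n) \u2260 D\u0304 for each i. Then M/N \u2245 \u2295_{i=1}^{r} D/(\u03b1^{n-n_i}), where n_i = 0 for j < i \u2264 r. -/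
/-!
Write `D̄ = D ⧸ (α ^ n)` and `π` for the image of `α`; `D̄` is a local ring with maximal ideal
`(π)`. In a free `D̄`-module an element killed by `π ^ s` is divisible by `π ^ (n - s)`, so
`x i = π ^ (n - nᵢ) • y i` for some `y i`. The `y i` stay independent modulo `π`: multiplying a
relation `∑ bᵢ • y i ∈ π • M` by `π ^ (n - 1)` gives `∑ (π ^ (nᵢ - 1) * bᵢ) • x i = 0`, so each
term vanishes by independence of the `x i D̄`, and `Ann (x i) = (π ^ nᵢ)` forces `π ∣ bᵢ`.
Extending their residues to a basis of `k ⊗ M` and lifting, Nakayama turns the `y i` into part of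
a basis `F` of `M`. In this basis `N` is spanned by the
`π ^ (n - nᵢ) • F i`, so `M ⧸ N ≅ ⨁ D̄ ⧸ (π ^ (n - nᵢ)) ≅ ⨁ D ⧸ (α ^ (n - nᵢ))`.
-/

open Module DirectSum

theorem exists_linearIndependent_comp_extend_fin {K V W : Type*} [DivisionRing K]
    [AddCommGroup V] [Module K V] {f : W → V} (hf : Function.Surjective f) {j r : ℕ}
    (hjr : j ≤ r) (hr : r ≤ finrank K V) {y : Fin j → W} (hy : LinearIndependent K (f ∘ y)) :
    ∃ G : Fin r → W, (∀ i, G (Fin.castLE hjr i) = y i) ∧ LinearIndependent K (f ∘ G) := by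
  induction r, hjr using Nat.le_induction with
  | base => exact ⟨y, fun i => rfl, hy⟩
  | succ m hjm ih =>
    obtain ⟨G, hGy, hG⟩ := ih (by omega)
    obtain ⟨v, hv⟩ := exists_linearIndependent_snoc_of_lt_finrank hG hr
    obtain ⟨w, rfl⟩ := hf v
    refine ⟨Fin.snoc G w, fun i => ?_, by rwa [Fin.comp_snoc]⟩
    rw [← hGy i]
    exact Fin.snoc_castSucc (α := fun _ => W) (p := G) (x := w) (i := Fin.castLE hjm i)

namespace IsLocalRing

open TensorProduct

theorem exists_basis_extend_of_linearIndependent_tmul {R M : Type*} [CommRing R] [IsLocalRing R]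
    [AddCommGroup M] [Module R M] {r j : ℕ} (e : Basis (Fin r) R M) (hjr : j ≤ r)
    {y : Fin j → M}
    (hy : LinearIndependent (ResidueField R) (TensorProduct.mk R (ResidueField R) M 1 ∘ y)) :
    ∃ F : Basis (Fin r) R M, ∀ i, F (Fin.castLE hjr i) = y i := by
  have := Module.Free.of_basis e
  have := Module.Finite.of_basis e
  have hrank : finrank (ResidueField R) (ResidueField R ⊗[R] M) = r := by
    rw [finrank_baseChange, finrank_eq_card_basis e, Fintype.card_fin]
  obtain ⟨G, hGy, hG⟩ := exists_linearIndependent_comp_extend_fin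
    (TensorProduct.mk_surjective R M (ResidueField R) residue_surjective) hjr hrank.ge hy
  let b := basisOfLinearIndependentOfCardEqFinrank' (K := ResidueField R) _ hG
    (by rw [hrank, Fintype.card_fin])
  have hli : LinearIndependent R G := Module.IsLocalRing.linearIndependent_of_flat G hG
  have hspan := span_eq_top_of_tmul_eq_basis G b fun _ => by simp [b]
  exact ⟨Basis.mk hli hspan.ge, fun i => by rw [Basis.mk_apply, hGy]⟩

end IsLocalRing

section TruncatedQuotient

variable {D : Type*} [CommRing D] {α : D} {n : ℕ}

local notation "D̄" => D ⧸ Ideal.span {α ^ n}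
local notation "π" => Ideal.Quotient.mk (Ideal.span {α ^ n}) α

theorem Ideal.Quotient.pow_sub_dvd_of_pow_mul_eq_zero [IsDomain D] (hα : α ≠ 0) {s : ℕ}
    (hs : s ≤ n) {c : D̄} (h : π ^ s * c = 0) : π ^ (n - s) ∣ c := by
  obtain ⟨k, rfl⟩ := Nat.exists_eq_add_of_le hs
  obtain ⟨c, rfl⟩ := Ideal.Quotient.mk_surjective c
  rw [← map_pow, ← map_mul, Ideal.Quotient.eq_zero_iff_mem, Ideal.mem_span_singleton, pow_add,
    mul_dvd_mul_iff_left (pow_ne_zero _ hα)] at h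
  simpa using map_dvd (Ideal.Quotient.mk _) h

theorem Ideal.Quotient.dvd_of_pow_dvd_pow_pred_mul [IsDomain D] (hα : α ≠ 0) {s : ℕ}
    (hs0 : s ≠ 0) (hs : s ≤ n) {b : D̄} (h : π ^ s ∣ π ^ (s - 1) * b) : π ∣ b := by
  obtain ⟨t, ht⟩ := h
  have hzero : π ^ (s - 1) * (b - π * t) = 0 := by
    rw [mul_sub, ht, ← mul_assoc, ← pow_succ, Nat.sub_add_cancel (Nat.one_le_iff_ne_zero.mpr hs0),
      sub_self]
  have hdvd : π ∣ b - π * t :=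
    (dvd_pow_self π (by omega)).trans (pow_sub_dvd_of_pow_mul_eq_zero hα (by omega) hzero)
  simpa using hdvd.add (dvd_mul_right π t)

theorem Ideal.Quotient.eq_span_of_isMaximal_of_prime_pow [IsDomain D] [IsPrincipalIdealRing D]
    (hα : Prime α) (Q : Ideal D̄) [Q.IsMaximal] : Q = Ideal.span {π} := by
  have hQ := Ideal.comap_isMaximal_of_surjective _ Ideal.Quotient.mk_surjective (K := Q)
  have hαQ : α ∈ Q.comap (Ideal.Quotient.mk _) := by
    refine hQ.isPrime.mem_of_pow_mem n ?_
    simp [Ideal.Quotient.eq_zero_iff_mem.mpr (Ideal.mem_span_singleton_self (α ^ n))]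
  have hspan : Ideal.span {α} = Q.comap (Ideal.Quotient.mk _) :=
    (PrincipalIdealRing.isMaximal_of_irreducible hα.irreducible).eq_of_le hQ.ne_top
      (Ideal.span_le.mpr (Set.singleton_subset_iff.mpr hαQ))
  rw [← Ideal.map_comap_of_surjective _ Ideal.Quotient.mk_surjective Q, ← hspan, Ideal.map_span,
    Set.image_singleton]

theorem Ideal.Quotient.isLocalRing_of_prime_pow [IsDomain D] [IsPrincipalIdealRing D]
    (hα : Prime α) (hn : n ≠ 0) : IsLocalRing D̄ := by
  have : Nontrivial D̄ := Ideal.Quotient.nontrivial_iff.mpr <| by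
    rw [Ne, Ideal.span_singleton_eq_top, isUnit_pow_iff hn]
    exact hα.not_isUnit
  obtain ⟨Q, hQ⟩ := Ideal.exists_maximal D̄
  exact .of_unique_max_ideal ⟨Q, hQ, fun Q' _ =>
    (eq_span_of_isMaximal_of_prime_pow hα Q').trans (eq_span_of_isMaximal_of_prime_pow hα Q).symm⟩

theorem Module.Basis.exists_eq_pow_smul_of_pow_smul_eq_zero [IsDomain D] {ι M : Type*}
    [Fintype ι] [AddCommGroup M] [Module D̄ M] (e : Basis ι D̄ M) (hα : α ≠ 0) {s : ℕ}
    (hs : s ≤ n) {v : M} (h : π ^ s • v = 0) : ∃ w, v = π ^ (n - s) • w := by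
  have hcoord (t : ι) : π ^ s * e.equivFun v t = 0 := by
    simpa using congrFun (congrArg e.equivFun h) t
  choose u hu using fun t => Ideal.Quotient.pow_sub_dvd_of_pow_mul_eq_zero hα hs (hcoord t)
  refine ⟨e.equivFun.symm u, e.equivFun.injective ?_⟩
  ext t
  rw [LinearEquiv.map_smul, LinearEquiv.apply_symm_apply, Pi.smul_apply, smul_eq_mul, hu t]

open IsLocalRing in
theorem linearIndependent_tmul_of_eq_pow_smul [IsDomain D] [IsPrincipalIdealRing D]
    [IsLocalRing D̄] (hα : Prime α) {ι M : Type*} [Fintype ι] [AddCommGroup M] [Module D̄ M]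
    {x y : ι → M} {s : ι → ℕ} (hs : ∀ i, s i ≤ n) (hs0 : ∀ i, s i ≠ 0)
    (hind : iSupIndep fun i => Submodule.span D̄ {x i})
    (hann : ∀ i, (Submodule.span D̄ {x i}).annihilator =
      Ideal.span {Ideal.Quotient.mk (Ideal.span {α ^ n}) (α ^ s i)})
    (hxy : ∀ i, x i = π ^ (n - s i) • y i) :
    LinearIndependent (ResidueField D̄) (TensorProduct.mk D̄ (ResidueField D̄) M 1 ∘ y) := by
  have hmax : maximalIdeal D̄ = Ideal.span {π} :=
    Ideal.Quotient.eq_span_of_isMaximal_of_prime_pow hα _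
  rw [Fintype.linearIndependent_iff]
  intro g hg i
  choose b hb using fun i => residue_surjective (g i)
  have hmem : ∑ i, b i • y i ∈ maximalIdeal D̄ • (⊤ : Submodule D̄ M) := by
    have hker : ∑ i, b i • y i ∈ LinearMap.ker (TensorProduct.mk D̄ (ResidueField D̄) M 1) := by
      rw [LinearMap.mem_ker, map_sum]
      refine (Finset.sum_congr rfl fun i _ => ?_).trans hg
      rw [← hb i, map_smul, Function.comp_apply, ← ResidueField.algebraMap_eq, algebraMap_smul]
    rw [← LinearMap.ker_tensorProductMk]
    exact hker
  rw [hmax, Submodule.ideal_span_singleton_smul] at hmem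
  obtain ⟨z, -, hz⟩ := (Submodule.mem_smul_pointwise_iff_exists _ _ _).mp hmem
  have hn : 1 ≤ n := (Nat.one_le_iff_ne_zero.mpr (hs0 i)).trans (hs i)
  have hsum : ∑ i, (π ^ (s i - 1) * b i) • x i = 0 := by
    calc ∑ i, (π ^ (s i - 1) * b i) • x i = π ^ (n - 1) • ∑ i, b i • y i := by
          rw [Finset.smul_sum]
          refine Finset.sum_congr rfl fun i _ => ?_
          rw [hxy i, smul_smul, smul_smul, mul_comm _ (b i), mul_assoc, ← pow_add,
            mul_comm (b i)]
          congr 3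
          have := hs i; have := hs0 i; omega
      _ = 0 := by
          rw [← hz, smul_smul, ← pow_succ, Nat.sub_add_cancel hn, ← map_pow, Ideal.Quotient.eq_zero_iff_mem.mpr (Ideal.mem_span_singleton_self _),
            zero_smul]
  have hterm := (iSupIndep_iff_finsetSum_eq_zero_imp_eq_zero _).mp hind Finset.univ _
    (fun i _ => Submodule.smul_mem _ _ (Submodule.mem_span_singleton_self (x i))) hsum i
    (Finset.mem_univ i)
  have hdvd : π ^ s i ∣ π ^ (s i - 1) * b i := by
    rw [← Ideal.mem_span_singleton, ← map_pow, ← hann i]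
    exact (Submodule.mem_annihilator_span_singleton _ _).mpr hterm
  rw [← hb i, residue_eq_zero_iff, hmax, Ideal.mem_span_singleton]
  exact Ideal.Quotient.dvd_of_pow_dvd_pow_pred_mul hα.ne_zero (hs0 i) (hs i) hdvd

end TruncatedQuotient

noncomputable def Module.Basis.quotientEquivPi {ι R M : Type*} [Fintype ι] [DecidableEq ι]
    [CommRing R] [AddCommGroup M] [Module R M] (b : Basis ι R M) (a : ι → R) :
    (M ⧸ ⨆ i, Submodule.span R {a i • b i}) ≃ₗ[R] Π i, R ⧸ Ideal.span {a i} :=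
  (Submodule.Quotient.equiv _ _ b.equivFun <| by
    rw [Submodule.map_iSup, ← Submodule.iSup_map_single]
    refine iSup_congr fun i => ?_
    rw [Submodule.map_span, Ideal.span, Submodule.map_span, Set.image_singleton,
      Set.image_singleton]
    simp [Finsupp.single_eq_pi_single, ← Pi.single_smul]).trans (Submodule.quotientPi _)

noncomputable def Ideal.quotientSpanQuotientSpanEquiv {R : Type*} [CommRing R] {a b : R}
    (h : b ∣ a) :
    ((R ⧸ Ideal.span {a}) ⧸ Ideal.span {Ideal.Quotient.mk (Ideal.span {a}) b}) ≃ₗ[R]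
      R ⧸ Ideal.span {b} :=
  ((Ideal.quotientEquivAlgOfEq R (by rw [Ideal.map_span, Set.image_singleton]; rfl)).trans
    (DoubleQuot.quotQuotEquivQuotOfLEₐ R
      (Ideal.span_singleton_le_span_singleton.mpr h))).toLinearEquiv

def LinearEquiv.restrictScalarsCompHom (R : Type*) {S P Q : Type*} [CommSemiring R] [Semiring S]
    [Algebra R S] [AddCommMonoid P] [Module S P] [AddCommMonoid Q] [Module R Q] [Module S Q]
    [IsScalarTower R S Q] (f : P ≃ₗ[S] Q) :
    letI := Module.compHom P (algebraMap R S)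
    P ≃ₗ[R] Q :=
  letI := Module.compHom P (algebraMap R S)
  { f with
    map_smul' := fun c p => (f.map_smul (algebraMap R S c) p).trans (algebraMap_smul S c (f p)) }

theorem iSup_castLE_eq_iSup {α : Type*} [CompleteLattice α] {j r : ℕ} (hjr : j ≤ r)
    (f : Fin r → α) (hf : ∀ t : Fin r, j ≤ t → f t = ⊥) :
    ⨆ i : Fin j, f (Fin.castLE hjr i) = ⨆ t, f t := by
  refine le_antisymm (iSup_le fun i => le_iSup f _) (iSup_le fun t => ?_)
  by_cases ht : (t : ℕ) < j
  · exact le_iSup_of_le ⟨t, ht⟩ le_rfl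
  · simp [hf t (not_lt.mp ht)]

/-- Let `D` be a PID, `α ∈ D` prime, `D̄ = D/(α^n)`, `M` a free `D̄`-module with
basis `e₁, …, e_r`, and `N = ⊕_{i=1}^{j} x_i D̄` a submodule with
`Ann(x_i) = (α^{n_i})/(α^n) ≠ D̄`.  Then
`M/N ≅ ⊕_{i=1}^{r} D/(α^{n-n_i})` (with `n_i = 0` for `j < i ≤ r`). -/
theorem stmt12 (D : Type*) [CommRing D] [IsDomain D] [IsPrincipalIdealRing D]
    (α : D) (hα : Prime α) (n : ℕ)
    (M : Type*) [AddCommGroup M] [Module (D ⧸ Ideal.span {α ^ n}) M]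
    (r j : ℕ) (hj1 : 1 ≤ j) (hjr : j ≤ r)
    (e : Module.Basis (Fin r) (D ⧸ Ideal.span {α ^ n}) M)
    (x : Fin j → M) (ni : Fin j → ℕ) (hni : ∀ i, ni i ≤ n)
    (hind : iSupIndep fun i : Fin j =>
      Submodule.span (D ⧸ Ideal.span {α ^ n}) {x i})
    (hann : ∀ i : Fin j,
      (Submodule.span (D ⧸ Ideal.span {α ^ n}) {x i}).annihilator =
        Ideal.span {Ideal.Quotient.mk (Ideal.span {α ^ n}) (α ^ ni i)})
    (hne : ∀ i : Fin j,
      (Submodule.span (D ⧸ Ideal.span {α ^ n}) {x i}).annihilator ≠ ⊤)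
    (N : Submodule (D ⧸ Ideal.span {α ^ n}) M)
    (hN : N = ⨆ i : Fin j, Submodule.span (D ⧸ Ideal.span {α ^ n}) {x i}) :
    letI : Module D (M ⧸ N) :=
      Module.compHom (M ⧸ N) (algebraMap D (D ⧸ Ideal.span {α ^ n}))
    Nonempty ((M ⧸ N) ≃ₗ[D]
      ⨁ i : Fin r, D ⧸ (Ideal.span
        {α ^ (n - (if h : (i : ℕ) < j then ni ⟨(i : ℕ), h⟩ else 0))} : Ideal D)) := by
  classical
  have hni0 (i : Fin j) : ni i ≠ 0 := fun h =>
    hne i (by rw [hann i, h, pow_zero, map_one, Ideal.span_singleton_one])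
  have hn : n ≠ 0 := by
    rintro rfl
    exact hni0 ⟨0, hj1⟩ (Nat.le_zero.mp (hni _))
  have := Ideal.Quotient.isLocalRing_of_prime_pow hα hn
  have hx0 (i : Fin j) : Ideal.Quotient.mk (Ideal.span {α ^ n}) α ^ ni i • x i = 0 := by
    rw [← map_pow, ← Submodule.mem_annihilator_span_singleton, hann i]
    exact Ideal.mem_span_singleton_self _
  choose y hxy using fun i => e.exists_eq_pow_smul_of_pow_smul_eq_zero hα.ne_zero (hni i) (hx0 i)
  obtain ⟨F, hF⟩ := IsLocalRing.exists_basis_extend_of_linearIndependent_tmul e hjr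
    (linearIndependent_tmul_of_eq_pow_smul hα hni hni0 hind hann hxy)
  set a : Fin r → D ⧸ Ideal.span {α ^ n} := fun t =>
    Ideal.Quotient.mk _ (α ^ (n - (if h : (t : ℕ) < j then ni ⟨(t : ℕ), h⟩ else 0)))
  have hN' : N = ⨆ t, Submodule.span _ {a t • F t} := by
    rw [hN, ← iSup_castLE_eq_iSup hjr]
    · congr! with i
      simp [a, hF, hxy]
    · intro t ht
      simp only [a, dif_neg (not_lt.mpr ht), Nat.sub_zero,
        Ideal.Quotient.eq_zero_iff_mem.mpr (Ideal.mem_span_singleton_self _), zero_smul,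
        Submodule.span_zero_singleton]
  subst hN'
  exact ⟨(F.quotientEquivPi a).restrictScalarsCompHom D ≪≫ₗ
    LinearEquiv.piCongrRight (fun t => Ideal.quotientSpanQuotientSpanEquiv
      (pow_dvd_pow α (Nat.sub_le _ _))) ≪≫ₗ (DirectSum.linearEquivFunOnFintype D _ _).symm⟩
end

section
/- Let char F = p > 0, 1 \u2264 r \u2264 s, and k \u2265 0. Then the Jordan partition \u03bb(p^k r, p^k s, p) is the p^k-multiple of \u03bb(r,s,p): if \u03bb(r,s,p) = (\u03bb_1, \u2026, \u03bb_r), then \u03bb(p^k r, p^k s, p) consists of the parts p^k \u03bb_i, each with multiplicity p^k, for i = 1, \u2026, r. -/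
/-!
`J_a ⊗ J_b` is the matrix of multiplication by `(1 + x)(1 + y)` on `F[x,y]/(x^a, y^b)` in a
monomial basis, so `λ(a,b,p)` is determined by the ranks of the powers of `t = x + y + xy`.
For `q = p^k` the Frobenius gives `t^q = φ(t)`, where `φ : x ↦ x^q, y ↦ y^q` maps
`F[x,y]/(x^r, y^s)` into `F[x,y]/(x^{qr}, y^{qs})`, and the latter is free over the image of `φ`
with basis `t^e x^f` (`e, f < q`). In this basis multiplication by `t` shifts the index `e`
cyclically, multiplying by the small `t` whenever it wraps around. Hence `t^m` on the big algebra
has rank `q ∑_{e<q} rank(t^⌊(m+e)/q⌋) = q ∑_j (q λ_j - m)`, which are the rank sums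
`∑_i (μ_i - m)` of the `q`-multiple `μ` of `λ`; and a weakly decreasing sequence is determined
by its rank sums.
-/

open Matrix Kronecker

section Partitions

open Finset

theorem sum_range_tsub_add_div (q L : ℕ) (hq : 0 < q) (m : ℕ) :
    ∑ e ∈ range q, (L - (m + e) / q) = q * L - m := by
  induction m with
  | zero =>
    rw [sum_congr rfl fun e he => by rw [zero_add, Nat.div_eq_of_lt (mem_range.1 he)]]
    simp
  | succ m ih =>
    have hshift := sum_range_succ' (fun e => L - (m + e) / q) q
    rw [sum_range_succ, ih, Nat.add_div_right m hq, add_zero] at hshift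
    simp only [← add_assoc, add_right_comm m _ 1] at hshift
    have := Nat.div_lt_iff_lt_mul (x := m) (y := L) hq
    rw [mul_comm] at this
    omega

theorem Fin.sum_comp_div {M : Type*} [AddCommMonoid M] (q r : ℕ) (h : Fin r → M) :
    ∑ i : Fin (q * r), h ⟨i / q, Nat.div_lt_of_lt_mul i.2⟩ = q • ∑ j, h j := by
  rw [← Fintype.sum_equiv (finProdFinEquiv.trans (finCongr (Nat.mul_comm r q))) (fun x => h x.1),
    Fintype.sum_prod_type, smul_sum]
  · simp
  · rintro ⟨j, e⟩
    congr
    simp [Nat.add_mul_div_left _ _ e.pos, Nat.div_eq_of_lt e.2]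

theorem sum_tsub_eq_sum_tsub_succ_add_card {ι : Type*} [Fintype ι] (f : ι → ℕ) (m : ℕ) :
    ∑ i, (f i - m) = ∑ i, (f i - (m + 1)) + #{i | m < f i} := by
  rw [card_filter, ← sum_add_distrib]
  refine sum_congr rfl fun i _ => ?_
  split_ifs <;> omega

theorem Antitone.lt_iff_lt_card_filter {α : Type*} [LinearOrder α] {n : ℕ} {f : Fin n → α}
    (hf : Antitone f) (m : α) (i : Fin n) : m < f i ↔ (i : ℕ) < #{j | m < f j} := by
  constructor
  · intro h
    have : Iic i ⊆ ({j | m < f j} : Finset _) := fun j hj => by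
      simpa using h.trans_le (hf (mem_Iic.1 hj))
    simpa using card_le_card this
  · intro h
    by_contra! hfi
    have : ({j | m < f j} : Finset _) ⊆ Iio i := fun j hj => by
      simp only [mem_filter, mem_univ, true_and] at hj
      exact mem_Iio.2 (lt_of_not_ge fun hij => (hj.trans_le ((hf hij).trans hfi)).false)
    simpa using (card_le_card this).trans_lt' h

theorem Antitone.eq_of_sum_tsub_eq {n : ℕ} {f g : Fin n → ℕ} (hf : Antitone f)
    (hg : Antitone g) (h : ∀ m, ∑ i, (f i - m) = ∑ i, (g i - m)) : f = g := by
  have hcard (m : ℕ) : #{j | m < f j} = #{j | m < g j} := by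
    have := h (m + 1)
    have := h m
    rw [sum_tsub_eq_sum_tsub_succ_add_card f, sum_tsub_eq_sum_tsub_succ_add_card g] at this
    omega
  funext i
  have key (m : ℕ) : m < f i ↔ m < g i := by
    rw [hf.lt_iff_lt_card_filter, hg.lt_iff_lt_card_filter, hcard]
  have := key (f i)
  have := key (g i)
  omega

def partitionMultiple {r : ℕ} (q : ℕ) (lam : Fin r → ℕ) : Fin (q * r) → ℕ :=
  fun i => q * lam ⟨i / q, Nat.div_lt_of_lt_mul i.2⟩

theorem Antitone.partitionMultiple {r : ℕ} {lam : Fin r → ℕ} (h : Antitone lam) (q : ℕ) :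
    Antitone (partitionMultiple q lam) := fun _ _ hij =>
  Nat.mul_le_mul_left q (h (Fin.mk_le_mk.2 (Nat.div_le_div_right hij)))

theorem sum_tsub_partitionMultiple {r : ℕ} (q : ℕ) (lam : Fin r → ℕ) (m : ℕ) :
    ∑ i, (partitionMultiple q lam i - m) = q * ∑ j, (q * lam j - m) :=
  Fin.sum_comp_div q r fun j => q * lam j - m

end Partitions

open Module LinearMap Polynomial TensorProduct

section LinearAlgebra

variable {K : Type*} [Field K]

theorem LinearMap.finrank_range_piMap {ι : Type*} [Fintype ι] {M N : ι → Type*}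
    [∀ i, AddCommGroup (M i)] [∀ i, Module K (M i)] [∀ i, AddCommGroup (N i)]
    [∀ i, Module K (N i)] [∀ i, FiniteDimensional K (N i)] (f : ∀ i, M i →ₗ[K] N i) :
    finrank K (range (piMap f)) = ∑ i, finrank K (range (f i)) := by
  have hf : piMap f =
      piMap (fun i => (range (f i)).subtype) ∘ₗ piMap (fun i => (f i).rangeRestrict) := rfl
  rw [hf, range_comp_of_range_eq_top, finrank_range_of_inj, finrank_pi_fintype]
  · exact Pi.map_injective.2 fun i => Subtype.val_injective
  · exact range_eq_top.2 (Function.Surjective.piMap fun i => (f i).surjective_rangeRestrict)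

theorem finrank_range_mulLeft_const {A ι : Type*} [Ring A] [Algebra K A] [FiniteDimensional K A]
    [Fintype ι] (c : A) :
    finrank K (range (mulLeft K (Function.const ι c))) =
      Fintype.card ι * finrank K (range (mulLeft K c)) := by
  rw [show mulLeft K (Function.const ι c) = piMap fun _ => mulLeft K c from rfl,
    finrank_range_piMap, Finset.sum_const, smul_eq_mul, Finset.card_univ]

theorem LinearEquiv.finrank_range_pow_eq {M N : Type*} [AddCommGroup M] [Module K M]
    [AddCommGroup N] [Module K N] (e : M ≃ₗ[K] N) {f : Module.End K M} {g : Module.End K N}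
    (h : ∀ v, e (f v) = g (e v)) (m : ℕ) :
    finrank K (range (g ^ m)) = finrank K (range (f ^ m)) := by
  have hm : e.toLinearMap ∘ₗ (f ^ m) = (g ^ m) ∘ₗ e.toLinearMap := by
    ext v
    simpa [Module.End.pow_apply] using (Function.Semiconj.iterate_right h m) v
  have hrange : range (g ^ m) = (range (f ^ m)).map (e : M →ₗ[K] N) := by
    rw [← LinearMap.range_comp, hm, range_comp_of_range_eq_top _ e.range]
  rw [hrange]
  exact e.finrank_map_eq _

end LinearAlgebra

theorem Submodule.eq_top_of_mul_mem {R A : Type*} [CommSemiring R] [Semiring A] [Algebra R A]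
    {S : Submodule R A} {s : Set A} (hs : Algebra.adjoin R s = ⊤) (h1 : 1 ∈ S)
    (hmul : ∀ a ∈ s, ∀ v ∈ S, a * v ∈ S) : S = ⊤ := by
  suffices h : ∀ c ∈ Algebra.adjoin R s, ∀ v ∈ S, c * v ∈ S from
    eq_top_iff.2 fun c _ => mul_one c ▸ h c (hs ▸ Algebra.mem_top) 1 h1
  intro c hc
  induction hc using Algebra.adjoin_induction with
  | mem a ha => exact hmul a ha
  | algebraMap r => exact fun v hv => Algebra.smul_def r v ▸ S.smul_mem r hv
  | add a b _ _ iha ihb =>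
    exact fun v hv => (add_mul a b v).symm ▸ S.add_mem (iha v hv) (ihb v hv)
  | mul a b _ _ iha ihb => exact fun v hv => (mul_assoc a b v).symm ▸ iha _ (ihb v hv)

section CyclicShift

variable {R M : Type*} [Semiring R] [AddCommMonoid M] [Module R M] {q : ℕ} [NeZero q]

def cycShift (T : Module.End R M) : Module.End R (Fin q → M) :=
  LinearMap.pi fun e => if e = 0 then T ∘ₗ proj (e - 1) else proj (e - 1)

theorem cycShift_apply (T : Module.End R M) (g : Fin q → M) (e : Fin q) :
    cycShift T g e = if e = 0 then T (g (e - 1)) else g (e - 1) := by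
  rw [cycShift, pi_apply]
  split_ifs <;> rfl

open Fin.NatCast in
/-- The exponent `(m + (q - 1 - e)) / q` is the number of wrap-arounds through index `0` on the
way from `e - m` to `e`. -/
theorem cycShift_pow_apply (T : Module.End R M) (m : ℕ) (g : Fin q → M) (e : Fin q) :
    (cycShift T ^ m) g e = (T ^ ((m + (q - 1 - e)) / q)) (g (e - m)) := by
  obtain ⟨n, rfl⟩ := Nat.exists_eq_succ_of_ne_zero (NeZero.ne q)
  induction m generalizing e with
  | zero => simp [Nat.div_eq_of_lt (by omega : n - (e : ℕ) < n + 1)]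
  | succ m ih =>
    have hidx : e - 1 - (m : Fin (n + 1)) = e - (m + 1 : ℕ) := by
      rw [Nat.cast_succ, sub_sub, add_comm]
    rw [pow_succ', Module.End.mul_apply, cycShift_apply, ih, hidx, Fin.coe_sub_one]
    split_ifs with he
    · rw [← Module.End.mul_apply, ← pow_succ', he, Fin.val_zero,
        show m + (n + 1 - 1 - n) = m by omega, show m + 1 + (n + 1 - 1 - 0) = m + (n + 1) by omega,
        Nat.add_div_right _ n.succ_pos]
    · have := Fin.val_ne_zero_iff.2 he
      rw [show m + (n + 1 - 1 - (e - 1)) = m + 1 + (n + 1 - 1 - e) by omega]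

end CyclicShift

theorem finrank_range_cycShift_pow {K M : Type*} [Field K] [AddCommGroup M] [Module K M]
    [FiniteDimensional K M] {q : ℕ} [NeZero q] (T : Module.End K M) (m : ℕ) :
    finrank K (range (cycShift (q := q) T ^ m)) =
      ∑ e : Fin q, finrank K (range (T ^ ((m + (q - 1 - e)) / q))) := by
  open Fin.NatCast in
  have hfactor : cycShift (q := q) T ^ m =
      piMap (fun e : Fin q => T ^ ((m + (q - 1 - e)) / q)) ∘ₗ
        (LinearEquiv.funCongrLeft K M (Equiv.subRight (m : Fin q))).toLinearMap := by
    ext g e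
    simp [cycShift_pow_apply]
  rw [hfactor, range_comp_of_range_eq_top _ (LinearEquiv.range _), finrank_range_piMap]

section PowSum

variable {R M B : Type*} [CommSemiring R] [AddCommMonoid M] [Module R M] [CommSemiring B]
  [Algebra R B] {q : ℕ}

def powSum (b : B) (ψ : M →ₗ[R] B) : (Fin q → M) →ₗ[R] B :=
  ∑ e : Fin q, mulLeft R (b ^ (e : ℕ)) ∘ₗ ψ ∘ₗ proj e

theorem powSum_apply (b : B) (ψ : M →ₗ[R] B) (g : Fin q → M) :
    powSum b ψ g = ∑ e : Fin q, b ^ (e : ℕ) * ψ (g e) := by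
  simp [powSum]

theorem mul_powSum [NeZero q] {b : B} {ψ : M →ₗ[R] B} {T : Module.End R M}
    (hT : ∀ v, b ^ q * ψ v = ψ (T v)) (g : Fin q → M) :
    b * powSum b ψ g = powSum b ψ (cycShift T g) := by
  obtain ⟨n, rfl⟩ := Nat.exists_eq_succ_of_ne_zero (NeZero.ne q)
  have hzero : (0 : Fin (n + 1)) - 1 = Fin.last n := by simp [Fin.ext_iff]
  have hsucc (i : Fin n) : i.succ - 1 = i.castSucc := by simp [Fin.ext_iff, Fin.coe_sub_one]
  rw [powSum_apply, powSum_apply, Finset.mul_sum, Fin.sum_univ_castSucc, Fin.sum_univ_succ,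
    add_comm]
  congr 1
  · simp [cycShift_apply, hzero, ← hT, ← mul_assoc, ← pow_succ']
  · refine Finset.sum_congr rfl fun i _ => ?_
    simp [cycShift_apply, hsucc, Fin.succ_ne_zero, ← mul_assoc, ← pow_succ']

end PowSum

noncomputable section

variable (F : Type*) [Field F]

abbrev TruncPoly (a : ℕ) := AdjoinRoot (X ^ a : F[X])

abbrev TruncPoly₂ (a b : ℕ) := TruncPoly F a ⊗[F] TruncPoly F b

namespace TruncPoly

variable {F}

theorem root_pow_self (a : ℕ) : AdjoinRoot.root (X ^ a : F[X]) ^ a = 0 := by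
  simpa using AdjoinRoot.eval₂_root (X ^ a : F[X])

variable (F) in
/-- The basis `root ^ (a - 1 - i)`: in this order multiplication by `root` is the superdiagonal
shift of `jordanBlock`. -/
def revBasis (a : ℕ) : Basis (Fin a) F (TruncPoly F a) :=
  ((AdjoinRoot.powerBasis' (monic_X_pow a)).basis.reindex
    (finCongr (natDegree_X_pow a))).reindex Fin.revPerm

theorem revBasis_apply {a : ℕ} (i : Fin a) :
    revBasis F a i = AdjoinRoot.root (X ^ a : F[X]) ^ (a - 1 - i) := by
  rw [revBasis, Basis.reindex_apply, Basis.reindex_apply, PowerBasis.basis_eq_pow,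
    AdjoinRoot.powerBasis'_gen]
  change _ ^ (i.rev : ℕ) = _
  rw [Fin.val_rev]
  congr 1
  omega

instance (a : ℕ) : Module.Finite F (TruncPoly F a) := .of_basis (revBasis F a)

theorem finrank_eq (a : ℕ) : finrank F (TruncPoly F a) = a := by
  simp [finrank_eq_card_basis (revBasis F a)]

theorem toMatrix_mulLeft_one_add_root (a : ℕ) :
    toMatrix (revBasis F a) (revBasis F a) (mulLeft F (1 + AdjoinRoot.root (X ^ a : F[X]))) =
      jordanBlock F a := by
  ext i j
  rw [toMatrix_apply, mulLeft_apply, revBasis_apply, add_mul, one_mul, ← pow_succ',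
    ← revBasis_apply]
  have := i.isLt
  have := j.isLt
  rcases Nat.eq_zero_or_pos (j : ℕ) with hj | hj
  · rw [hj, Nat.sub_zero, Nat.sub_add_cancel (by omega : 1 ≤ a), root_pow_self, add_zero,
      Basis.repr_self]
    simp [jordanBlock, Finsupp.single_apply, Fin.ext_iff, hj]
  · have hprev : AdjoinRoot.root (X ^ a : F[X]) ^ (a - 1 - j + 1) =
        revBasis F a ⟨j - 1, by omega⟩ := by
      rw [revBasis_apply]
      congr 1
      simp only
      omega
    rw [hprev, map_add, Basis.repr_self, Basis.repr_self]
    simp only [jordanBlock, Finsupp.add_apply, Finsupp.single_apply, Fin.ext_iff, Matrix.of_apply]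
    split_ifs <;> first | omega | simp

variable (F) in
def expand (q a : ℕ) : TruncPoly F a →ₐ[F] TruncPoly F (q * a) :=
  AdjoinRoot.liftAlgHom _ (Algebra.ofId F _) (AdjoinRoot.root _ ^ q)
    (by simp [← pow_mul, root_pow_self])

theorem expand_root (q a : ℕ) :
    expand F q a (AdjoinRoot.root _) = AdjoinRoot.root (X ^ (q * a) : F[X]) ^ q :=
  AdjoinRoot.liftAlgHom_root ..

end TruncPoly

namespace TruncPoly₂

variable {F}

variable (F) in
def x (a b : ℕ) : TruncPoly₂ F a b := AdjoinRoot.root _ ⊗ₜ 1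

variable (F) in
def y (a b : ℕ) : TruncPoly₂ F a b := 1 ⊗ₜ AdjoinRoot.root _

variable (F) in
def t (a b : ℕ) : TruncPoly₂ F a b := x F a b + y F a b + x F a b * y F a b

theorem x_pow_self (a b : ℕ) : x F a b ^ a = 0 := by
  simp [x, Algebra.TensorProduct.tmul_pow, TruncPoly.root_pow_self]

theorem one_add_t (a b : ℕ) :
    1 + t F a b = (1 + AdjoinRoot.root _) ⊗ₜ (1 + AdjoinRoot.root _) := by
  simp only [t, x, y, Algebra.TensorProduct.one_def, Algebra.TensorProduct.tmul_mul_tmul, add_tmul,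
    tmul_add, one_mul, mul_one]
  abel

variable (F) in
abbrev revBasis (a b : ℕ) : Basis (Fin a × Fin b) F (TruncPoly₂ F a b) :=
  (TruncPoly.revBasis F a).tensorProduct (TruncPoly.revBasis F b)

theorem toMatrix_mulLeft_t (a b : ℕ) :
    toMatrix (revBasis F a b) (revBasis F a b) (mulLeft F (t F a b)) =
      jordanBlock F a ⊗ₖ jordanBlock F b - 1 := by
  have hmul : mulLeft F (1 + t F a b) =
      TensorProduct.map (mulLeft F (1 + AdjoinRoot.root _))
        (mulLeft F (1 + AdjoinRoot.root _)) := by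
    ext u v
    simp [one_add_t]
  have hsub : mulLeft F (t F a b) = mulLeft F (1 + t F a b) - 1 :=
    LinearMap.ext fun v => by simp [add_mul]
  rw [hsub, map_sub, hmul, TensorProduct.toMatrix_map, TruncPoly.toMatrix_mulLeft_one_add_root,
    TruncPoly.toMatrix_mulLeft_one_add_root, toMatrix_one]

theorem rank_jordanBlock_kronecker_sub_one_pow (a b m : ℕ) :
    ((jordanBlock F a ⊗ₖ jordanBlock F b - 1) ^ m).rank =
      finrank F (range (mulLeft F (t F a b ^ m))) := by
  rw [← toMatrix_mulLeft_t, toMatrix_pow,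
    Matrix.rank_eq_finrank_range_toLin _ (revBasis F a b) (revBasis F a b), Matrix.toLin_toMatrix,
    pow_mulLeft]

variable (F) in
def expand (q a b : ℕ) : TruncPoly₂ F a b →ₐ[F] TruncPoly₂ F (q * a) (q * b) :=
  Algebra.TensorProduct.map (TruncPoly.expand F q a) (TruncPoly.expand F q b)

theorem expand_x (q a b : ℕ) : expand F q a b (x F a b) = x F (q * a) (q * b) ^ q := by
  simp [expand, x, TruncPoly.expand_root, Algebra.TensorProduct.tmul_pow]

theorem expand_y (q a b : ℕ) : expand F q a b (y F a b) = y F (q * a) (q * b) ^ q := by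
  simp [expand, y, TruncPoly.expand_root, Algebra.TensorProduct.tmul_pow]

theorem t_pow_expChar_pow (p : ℕ) [ExpChar F p] (k a b : ℕ) :
    t F (p ^ k * a) (p ^ k * b) ^ p ^ k = expand F (p ^ k) a b (t F a b) := by
  -- `ExpChar` passes from `F` to the algebra only when the algebra is nontrivial.
  cases subsingleton_or_nontrivial (TruncPoly₂ F (p ^ k * a) (p ^ k * b))
  · exact Subsingleton.elim _ _
  have := expChar_of_injective_algebraMap
    (algebraMap F (TruncPoly₂ F (p ^ k * a) (p ^ k * b))).injective p
  simp [t, add_pow_expChar_pow, mul_pow, expand_x, expand_y]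

theorem adjoin_x_y (a b : ℕ) : Algebra.adjoin F {x F a b, y F a b} = ⊤ := by
  rw [eq_top_iff, ← Algebra.TensorProduct.adjoin_tmul_eq_top, Algebra.adjoin_le_iff]
  have hroot {c : ℕ} (f : TruncPoly F c →ₐ[F] TruncPoly₂ F a b) (w : TruncPoly F c) :
      f w ∈ Algebra.adjoin F {f (AdjoinRoot.root _)} := by
    rw [← Set.image_singleton, ← AlgHom.map_adjoin, AdjoinRoot.adjoinRoot_eq_top]
    exact Subalgebra.mem_map.2 ⟨w, trivial, rfl⟩
  rintro _ ⟨u, v, rfl⟩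
  rw [← mul_one u, ← one_mul v, ← Algebra.TensorProduct.tmul_mul_tmul]
  refine mul_mem (Algebra.adjoin_mono ?_ (hroot Algebra.TensorProduct.includeLeft u))
    (Algebra.adjoin_mono ?_ (hroot Algebra.TensorProduct.includeRight v))
  · simp [x]
  · simp [y]

theorem y_mem_adjoin_x_t (a b : ℕ) : y F a b ∈ Algebra.adjoin F {x F a b, t F a b} := by
  set S := Algebra.adjoin F {x F a b, t F a b}
  have hx : x F a b ∈ S := Algebra.subset_adjoin (by simp)
  have ht : t F a b ∈ S := Algebra.subset_adjoin (by simp)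
  -- `1 + x` is inverted by the geometric series in `-x`, a polynomial in `x` since `x ^ a = 0`.
  have hinv : (∑ i ∈ Finset.range a, (-x F a b) ^ i) * (1 + x F a b) = 1 := by
    have hneg : (-x F a b) ^ a = 0 := by rw [neg_pow, x_pow_self, mul_zero]
    rw [← sub_neg_eq_add, geom_sum_mul_neg, hneg, sub_zero]
  have htx : t F a b - x F a b = y F a b * (1 + x F a b) := by rw [t]; ring
  have hy : y F a b = (t F a b - x F a b) * ∑ i ∈ Finset.range a, (-x F a b) ^ i := by
    rw [htx, mul_assoc, mul_comm (1 + _), hinv, mul_one]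
  rw [hy]
  exact mul_mem (sub_mem ht hx) (sum_mem fun i _ => pow_mem (neg_mem hx) i)

theorem adjoin_x_t (a b : ℕ) : Algebra.adjoin F {x F a b, t F a b} = ⊤ := by
  rw [eq_top_iff, ← adjoin_x_y, Algebra.adjoin_le_iff, Set.insert_subset_iff,
    Set.singleton_subset_iff]
  exact ⟨Algebra.subset_adjoin (by simp), y_mem_adjoin_x_t a b⟩

variable {q : ℕ} [NeZero q]

variable (F q) in
def blockSum (a b : ℕ) :
    (Fin q → Fin q → TruncPoly₂ F a b) →ₗ[F] TruncPoly₂ F (q * a) (q * b) :=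
  powSum (t F (q * a) (q * b)) (powSum (x F (q * a) (q * b)) (expand F q a b).toLinearMap)

theorem x_mul_blockSum (a b : ℕ) (g : Fin q → Fin q → TruncPoly₂ F a b) :
    x F (q * a) (q * b) * blockSum F q a b g =
      blockSum F q a b (fun e => cycShift (mulLeft F (x F a b)) (g e)) := by
  simp only [blockSum, powSum_apply (t _ _ _), Finset.mul_sum]
  refine Finset.sum_congr rfl fun e _ => ?_
  rw [mul_left_comm, mul_powSum fun v => ?_]
  simp [expand_x]

theorem t_mul_blockSum {a b : ℕ} (ht : t F (q * a) (q * b) ^ q = expand F q a b (t F a b))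
    (g : Fin q → Fin q → TruncPoly₂ F a b) :
    t F (q * a) (q * b) * blockSum F q a b g =
      blockSum F q a b (cycShift (mulLeft F (Function.const (Fin q) (t F a b))) g) := by
  refine mul_powSum (fun v => ?_) g
  simp only [powSum_apply, Finset.mul_sum, ht]
  refine Finset.sum_congr rfl fun f _ => ?_
  simp [mul_left_comm]

theorem blockSum_surjective {a b : ℕ}
    (ht : t F (q * a) (q * b) ^ q = expand F q a b (t F a b)) :
    Function.Surjective (blockSum F q a b) := by
  rw [← range_eq_top]
  refine Submodule.eq_top_of_mul_mem (adjoin_x_t _ _) ⟨Pi.single 0 (Pi.single 0 1), ?_⟩ ?_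
  · simp [blockSum, powSum_apply, Pi.single_apply, apply_ite]
  · simp only [Set.mem_insert_iff, Set.mem_singleton_iff]
    rintro _ (rfl | rfl) _ ⟨g, rfl⟩
    · exact ⟨_, (x_mul_blockSum a b g).symm⟩
    · exact ⟨_, (t_mul_blockSum ht g).symm⟩

variable (F q) in
def blockEquiv {a b : ℕ} (ht : t F (q * a) (q * b) ^ q = expand F q a b (t F a b)) :
    (Fin q → Fin q → TruncPoly₂ F a b) ≃ₗ[F] TruncPoly₂ F (q * a) (q * b) :=
  LinearEquiv.ofBijective (blockSum F q a b) ⟨(injective_iff_surjective_of_finrank_eq_finrank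
    (by simp [finrank_pi_fintype, TruncPoly.finrank_eq]; ring)).2 (blockSum_surjective ht),
    blockSum_surjective ht⟩

theorem finrank_range_mulLeft_t_pow {a b : ℕ}
    (ht : t F (q * a) (q * b) ^ q = expand F q a b (t F a b)) (m : ℕ) :
    finrank F (range (mulLeft F (t F (q * a) (q * b) ^ m))) =
      q * ∑ e : Fin q, finrank F (range (mulLeft F (t F a b ^ ((m + (q - 1 - e)) / q)))) := by
  rw [← pow_mulLeft, (blockEquiv F q ht).finrank_range_pow_eq (g := mulLeft F _)
      fun g => (t_mul_blockSum ht g).symm, finrank_range_cycShift_pow, Finset.mul_sum]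
  refine Finset.sum_congr rfl fun e _ => ?_
  rw [pow_mulLeft, Function.const_pow, finrank_range_mulLeft_const, Fintype.card_fin]

end TruncPoly₂

theorem rank_jordanBlock_kronecker_expChar_pow (p : ℕ) [ExpChar F p] (k r s m : ℕ) :
    ((jordanBlock F (p ^ k * r) ⊗ₖ jordanBlock F (p ^ k * s) - 1) ^ m).rank =
      p ^ k * ∑ e ∈ Finset.range (p ^ k),
        ((jordanBlock F r ⊗ₖ jordanBlock F s - 1) ^ ((m + e) / p ^ k)).rank := by
  have : NeZero (p ^ k) := ⟨pow_ne_zero k (expChar_pos F p).ne'⟩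
  simp_rw [TruncPoly₂.rank_jordanBlock_kronecker_sub_one_pow]
  rw [TruncPoly₂.finrank_range_mulLeft_t_pow (TruncPoly₂.t_pow_expChar_pow p k r s),
    Fin.sum_univ_eq_sum_range (fun e => finrank F (range (mulLeft F
      (TruncPoly₂.t F r s ^ ((m + (p ^ k - 1 - e)) / p ^ k))))),
    Finset.sum_range_reflect (fun e => finrank F (range (mulLeft F
      (TruncPoly₂.t F r s ^ ((m + e) / p ^ k)))))]

end

theorem stmt15_general (F : Type*) [Field F] (p : ℕ) [CharP F p] (hp : p.Prime)
    (k r s : ℕ)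
    (lam : Fin r → ℕ) (lam' : Fin (p ^ k * r) → ℕ)
    (h1 : IsJordanSeq (jordanBlock F r ⊗ₖ jordanBlock F s) lam)
    (h2 : IsJordanSeq (jordanBlock F (p ^ k * r) ⊗ₖ jordanBlock F (p ^ k * s)) lam') :
    ∀ i : Fin (p ^ k * r), ∀ h : (i : ℕ) / p ^ k < r,
      lam' i = p ^ k * lam ⟨(i : ℕ) / p ^ k, h⟩ := by
  have := Fact.mk hp
  obtain ⟨hlam, -, hrank⟩ := h1
  obtain ⟨hlam', -, hrank'⟩ := h2
  have hmultiple : lam' = partitionMultiple (p ^ k) lam := by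
    refine hlam'.eq_of_sum_tsub_eq (hlam.partitionMultiple _) fun m => ?_
    rw [← hrank', rank_jordanBlock_kronecker_expChar_pow F p, sum_tsub_partitionMultiple]
    simp_rw [hrank]
    rw [Finset.sum_comm]
    simp_rw [sum_range_tsub_add_div _ _ (pow_pos hp.pos k)]
  intro i h
  rw [hmultiple]
  rfl

/-- `λ(p^k r, p^k s, p)` is the `p^k`-multiple of `λ(r,s,p)`: its `q`-th part
(0-indexed) equals `p^k · λ_{⌊q/p^k⌋}`, i.e. each part `λ_i` is multiplied by
`p^k` and repeated `p^k` times. -/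
theorem stmt15 (F : Type*) [Field F] (p : ℕ) [CharP F p] (hp : p.Prime)
    (k r s : ℕ) (hr : 1 ≤ r) (hrs : r ≤ s)
    (lam : Fin r → ℕ) (lam' : Fin (p ^ k * r) → ℕ)
    (h1 : IsJordanSeq (jordanBlock F r ⊗ₖ jordanBlock F s) lam)
    (h2 : IsJordanSeq (jordanBlock F (p ^ k * r) ⊗ₖ jordanBlock F (p ^ k * s)) lam') :
    ∀ i : Fin (p ^ k * r), ∀ h : (i : ℕ) / p ^ k < r,
      lam' i = p ^ k * lam ⟨(i : ℕ) / p ^ k, h⟩ :=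
  stmt15_general F p hp k r s lam lam' h1 h2
end
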